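/- arXiv:1507.05226 — 5 statements merged into one kernel-verified Lean document; each statement's English description precedes it below -/
import Mathlib

section
/- For every ε > 0 there exists a natural number r_ε such that every triangle-free graph H with minimum degree δ(H) > (1/3 + ε)·v(H), where v(H) is the number of vertices of H, has chromatic number at most r_ε. -/
/-!
Adding edges, we may assume that `H` is maximal triangle-free, so any two non-adjacent vertices
`u, v` have a common neighbour `w`. Since `N(w)` is disjoint from `N(u) ∪ N(v)`, the degree bound
gives `u` and `v` more than `3εn` common neighbours. Consequently a set `S` shattered by the
neighbourhoods has at most `1 / (3ε)` elements: each `x ∈ S` has more than `3εn` private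
neighbours, those it shares with a vertex whose neighbourhood meets `S` in `S \ {x}`.

The neighbourhoods thus form a family of bounded VC-dimension whose members have density at least
`1 / c` for `c = 3`, and by the ε-net theorem of Haussler and Welzl they are all hit by a set `S`
of bounded size. The ε-net theorem follows by double sampling: if a random sample of size
`m = 2ck` misses some member `A`, an independent second sample hits `A` at least `k` times with
probability at least `1 / (2c)` (Markov). But for a fixed pair of samples and a fixed trace of a member on it, at most
`2^(m-k)` of the `2^m` coordinatewise swaps of the pair move the whole trace into the second
sample, and by Sauer–Shelah there are only polynomially many traces.

Finally, colouring each vertex by its set of neighbours in `S` is proper, as two adjacent vertices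
with the same colour would have a common neighbour.
-/

open Finset Filter

theorem Nat.exists_mul_pow_lt_two_pow (a b d : ℕ) : ∃ k, a * (b * k + 1) ^ d < 2 ^ k := by
  have h := (tendsto_pow_const_div_const_pow_of_one_lt d one_lt_two).const_mul
    ((a * (b + 1) ^ d : ℕ) : ℝ)
  rw [mul_zero] at h
  obtain ⟨k, hk, hk1⟩ := ((h.eventually (gt_mem_nhds one_pos)).and (eventually_ge_atTop 1)).exists
  refine ⟨k, ?_⟩
  have hpos : (0 : ℝ) < 2 ^ k := by positivity
  rw [mul_div_assoc', div_lt_one hpos] at hk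
  have hbk : b * k + 1 ≤ (b + 1) * k := by nlinarith
  calc a * (b * k + 1) ^ d ≤ a * (b + 1) ^ d * k ^ d := by
        rw [mul_assoc, ← mul_pow]; gcongr
    _ < 2 ^ k := by exact_mod_cast hk

namespace Finset

section Traces

variable {ι α : Type*} [Fintype ι] [DecidableEq ι] [DecidableEq α]

theorem vcDim_image_filter_mem_le (f : ι → α) (𝒜 : Finset (Finset α)) :
    (𝒜.image fun A => ({i | f i ∈ A} : Finset ι)).vcDim ≤ 𝒜.vcDim := by
  refine Finset.sup_le fun u hu => ?_
  replace hu := mem_shatterer.1 hu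
  have hinj : Set.InjOn f u := by
    intro x hx y hy hxy
    obtain ⟨_, ht, hxt⟩ := hu.exists_inter_eq_singleton hx
    obtain ⟨A, -, rfl⟩ := mem_image.1 ht
    have hx' : x ∈ u ∩ ({i | f i ∈ A} : Finset ι) := hxt ▸ mem_singleton_self x
    have hy' : y ∈ u ∩ ({i | f i ∈ A} : Finset ι) := by
      simp only [mem_inter, mem_filter, mem_univ, true_and] at hx' ⊢
      exact ⟨hy, hxy ▸ hx'.2⟩
    rw [hxt, mem_singleton] at hy'
    exact hy'.symm
  have hshat : 𝒜.Shatters (u.image f) := by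
    intro T hT
    obtain ⟨_, ht, hut⟩ := hu (filter_subset (fun i => f i ∈ T) u)
    obtain ⟨A, hA, rfl⟩ := mem_image.1 ht
    refine ⟨A, hA, ?_⟩
    ext a
    constructor
    · simp only [mem_inter, mem_image]
      rintro ⟨⟨i, hi, rfl⟩, hiA⟩
      have : i ∈ u ∩ ({i | f i ∈ A} : Finset ι) := by simp [hi, hiA]
      rw [hut] at this
      exact (mem_filter.1 this).2
    · intro ha
      obtain ⟨i, hi, rfl⟩ := mem_image.1 (hT ha)
      have : i ∈ u.filter fun i => f i ∈ T := mem_filter.2 ⟨hi, ha⟩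
      rw [← hut] at this
      exact mem_inter.2 ⟨mem_image_of_mem f hi, (mem_filter.1 (mem_inter.1 this).2).2⟩
  rw [← card_image_of_injOn hinj]
  exact hshat.card_le_vcDim

theorem card_image_filter_mem_le (f : ι → α) {𝒜 : Finset (Finset α)} {d : ℕ}
    (h𝒜 : 𝒜.vcDim ≤ d) :
    #(𝒜.image fun A => ({i | f i ∈ A} : Finset ι)) ≤ (d + 1) * (Fintype.card ι + 1) ^ d := by
  set ℬ := 𝒜.image fun A => ({i | f i ∈ A} : Finset ι)
  have hℬ : ℬ.vcDim ≤ d := (vcDim_image_filter_mem_le f 𝒜).trans h𝒜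
  calc #ℬ ≤ #ℬ.shatterer := card_le_card_shatterer ℬ
    _ ≤ ∑ j ∈ Iic ℬ.vcDim, (Fintype.card ι).choose j := card_shatterer_le_sum_vcDim
    _ ≤ ∑ j ∈ Iic d, (Fintype.card ι).choose j := sum_le_sum_of_subset (Iic_subset_Iic.2 hℬ)
    _ ≤ ∑ _j ∈ Iic d, (Fintype.card ι + 1) ^ d := sum_le_sum fun j hj =>
        calc (Fintype.card ι).choose j ≤ Fintype.card ι ^ j := Nat.choose_le_pow _ _
          _ ≤ (Fintype.card ι + 1) ^ j := by gcongr; omega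
          _ ≤ (Fintype.card ι + 1) ^ d := Nat.pow_le_pow_right (by omega) (mem_Iic.1 hj)
    _ = (d + 1) * (Fintype.card ι + 1) ^ d := by simp

end Traces

section Sampling

variable {ι α : Type*} [Fintype ι] [DecidableEq ι] [Fintype α] [DecidableEq α]

theorem card_filter_apply_mem (B : Finset α) (i : ι) :
    #{g : ι → α | g i ∈ B} = #B * Fintype.card α ^ (Fintype.card ι - 1) := by
  have : ({g : ι → α | g i ∈ B} : Finset (ι → α)) =
      Fintype.piFinset (Function.update (fun _ => univ) i B) := by
    ext g
    simp only [mem_filter, mem_univ, true_and, Fintype.mem_piFinset]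
    constructor
    · intro hg j
      rcases eq_or_ne j i with rfl | hj <;> simp [*]
    · intro hg
      simpa using hg i
  rw [this, Fintype.card_piFinset, Fintype.prod_eq_mul_prod_compl i,
    prod_congr rfl fun j hj => by rw [Function.update_of_ne (by simpa using hj)]]
  simp [card_compl]

theorem sum_card_filter_apply_mem (B : Finset α) :
    ∑ g : ι → α, #{i | g i ∈ B} =
      Fintype.card ι * (#B * Fintype.card α ^ (Fintype.card ι - 1)) := by
  simp_rw [card_filter]
  rw [sum_comm]
  simp [card_filter_apply_mem]

/-- A uniform sample of size `m ≥ 2ck` hits a set of density at least `1 / c` at least `k` times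
with probability at least `1 / (2c)`, by Markov's inequality for the number of misses. -/
theorem card_pow_le_two_mul_card_filter_le_card_filter_apply_mem [Nonempty α] {c k : ℕ}
    (hk : 2 * c * k ≤ Fintype.card ι) {A : Finset α} (hA : Fintype.card α ≤ c * #A) :
    Fintype.card α ^ Fintype.card ι ≤ 2 * c * #{g : ι → α | k ≤ #{i | g i ∈ A}} := by
  set n := Fintype.card α
  set m := Fintype.card ι
  have hc : 1 ≤ c := by
    have : 0 < n := Fintype.card_pos
    by_contra! h
    simp_all
  rcases Nat.eq_zero_or_pos m with hm | hm
  · have hk0 : k = 0 := by nlinarith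
    simp only [hk0, zero_le, filter_true, card_univ, Fintype.card_fun]
    exact Nat.le_mul_of_pos_left _ (by omega)
  set good : Finset (ι → α) := {g | k ≤ #{i | g i ∈ A}}
  set bad : Finset (ι → α) := {g | ¬ k ≤ #{i | g i ∈ A}}
  have hsplit : #good + #bad = n ^ m := by
    rw [card_filter_add_card_filter_not, card_univ, Fintype.card_fun]
  have hmiss : ∀ g ∈ bad, 2 * c * m ≤ 2 * c * #{i | g i ∈ Aᶜ} + m := by
    intro g hg
    have hg : #{i | g i ∈ A} < k := by simpa [bad] using hg
    have : #{i | g i ∈ A} + #{i | g i ∈ Aᶜ} = m := by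
      simp only [mem_compl]
      rw [card_filter_add_card_filter_not, card_univ]
    nlinarith
  have hsum : m * (2 * c * #bad) ≤ m * (2 * c * (#Aᶜ * n ^ (m - 1)) + #bad) := by
    calc m * (2 * c * #bad) = ∑ _g ∈ bad, 2 * c * m := by rw [sum_const, smul_eq_mul]; ring
      _ ≤ ∑ g ∈ bad, (2 * c * #{i | g i ∈ Aᶜ} + m) := sum_le_sum hmiss
      _ ≤ 2 * c * ∑ g : ι → α, #{i | g i ∈ Aᶜ} + m * #bad := by
          rw [sum_add_distrib, ← mul_sum, sum_const, smul_eq_mul, mul_comm #bad]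
          gcongr
          exact subset_univ bad
      _ = m * (2 * c * (#Aᶜ * n ^ (m - 1)) + #bad) := by
          rw [sum_card_filter_apply_mem]; ring
  have hbad := Nat.le_of_mul_le_mul_left hsum hm
  have hAc : c * #Aᶜ + n ≤ c * n := by
    have := card_compl_add_card A
    nlinarith
  have hn : n ^ m = n * n ^ (m - 1) := by rw [← pow_succ']; congr 1; omega
  nlinarith [Nat.mul_le_mul_right (n ^ (m - 1)) hAc]

end Sampling

section Swap

variable {ι : Type*} [Fintype ι] [DecidableEq ι]

theorem two_pow_mul_card_filter_forall_notMem_le (E : Finset (ι × Bool)) (k : ℕ) :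
    2 ^ k * #{s : ι → Bool | (∀ i, (i, s i) ∉ E) ∧ k ≤ #{i | (i, !s i) ∈ E}} ≤
      2 ^ Fintype.card ι := by
  set 𝒮 : Finset (ι → Bool) := {s | (∀ i, (i, s i) ∉ E) ∧ k ≤ #{i | (i, !s i) ∈ E}}
  rcases 𝒮.eq_empty_or_nonempty with h𝒮 | ⟨s₀, hs₀⟩
  · simp [h𝒮]
  set D := E.image Prod.fst
  have hkD : k ≤ #D := by
    refine (mem_filter.1 hs₀).2.2.trans (card_le_card fun i hi => ?_)
    exact mem_image.2 ⟨_, (mem_filter.1 hi).2, rfl⟩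
  -- for `i ∈ D` some `(i, b)` lies in `E`, which forces `s i = !b` for every `s ∈ 𝒮`
  have hforced : ∀ s ∈ 𝒮, ∀ i ∈ D, s i = s₀ i := by
    intro s hs i hi
    obtain ⟨⟨i, b⟩, hb, rfl⟩ := mem_image.1 hi
    have h := (mem_filter.1 hs).2.1 i
    have h₀ := (mem_filter.1 hs₀).2.1 i
    cases b <;> cases hsi : s i <;> cases hs₀i : s₀ i <;> simp_all
  have hinj : Set.InjOn (fun (s : ι → Bool) (j : ↥Dᶜ) => s j) 𝒮 := by
    intro s hs s' hs' h
    funext i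
    by_cases hi : i ∈ D
    · rw [hforced s hs i hi, hforced s' hs' i hi]
    · exact congrFun h ⟨i, mem_compl.2 hi⟩
  have hcard : #𝒮 ≤ 2 ^ (Fintype.card ι - #D) := by
    simpa [card_compl] using card_le_card_of_injOn _ (fun _ _ => mem_univ _) hinj
  calc 2 ^ k * #𝒮 ≤ 2 ^ #D * 2 ^ (Fintype.card ι - #D) := by gcongr; norm_num
    _ = 2 ^ Fintype.card ι := by rw [← pow_add]; congr 1; have := card_le_univ D; omega

end Swap

section DoubleSample

variable {ι α : Type*}

def joinSamples (g : (ι → α) × (ι → α)) (p : ι × Bool) : α :=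
  bif p.2 then g.2 p.1 else g.1 p.1

-- exchanges the `i`-th entries of the two samples where `s i = true`
def swapSamples (s : ι → Bool) (g : (ι → α) × (ι → α)) : (ι → α) × (ι → α) :=
  (fun i => joinSamples g (i, s i), fun i => joinSamples g (i, !s i))

theorem swapSamples_involutive (s : ι → Bool) : Function.Involutive (swapSamples (α := α) s) := by
  intro g
  ext i <;> simp only [swapSamples, joinSamples] <;> cases s i <;> rfl

variable [Fintype ι] [DecidableEq ι] [Fintype α] [DecidableEq α]

def missHitPairs (𝒜 : Finset (Finset α)) (k : ℕ) : Finset ((ι → α) × (ι → α)) :=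
  {g | ∃ A ∈ 𝒜, (∀ i, g.1 i ∉ A) ∧ k ≤ #{i | g.2 i ∈ A}}

theorem two_pow_mul_card_filter_swapSamples_mem_le (𝒜 : Finset (Finset α)) (k : ℕ)
    (g : (ι → α) × (ι → α)) :
    2 ^ k * #{s : ι → Bool | swapSamples s g ∈ missHitPairs 𝒜 k} ≤
      #(𝒜.image fun A => ({p | joinSamples g p ∈ A} : Finset (ι × Bool))) *
        2 ^ Fintype.card ι := by
  set 𝒯 := 𝒜.image fun A => ({p | joinSamples g p ∈ A} : Finset (ι × Bool))
  have hsub : ({s | swapSamples s g ∈ missHitPairs 𝒜 k} : Finset (ι → Bool)) ⊆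
      𝒯.biUnion fun E => {s | (∀ i, (i, s i) ∉ E) ∧ k ≤ #{i | (i, !s i) ∈ E}} := by
    intro s hs
    obtain ⟨A, hA, hmiss, hhit⟩ := by simpa [missHitPairs] using hs
    simp only [mem_biUnion, 𝒯, mem_image]
    exact ⟨_, ⟨A, hA, rfl⟩, by simpa [swapSamples] using ⟨hmiss, hhit⟩⟩
  calc 2 ^ k * #{s : ι → Bool | swapSamples s g ∈ missHitPairs 𝒜 k}
      ≤ ∑ E ∈ 𝒯, 2 ^ k * #{s : ι → Bool | (∀ i, (i, s i) ∉ E) ∧ k ≤ #{i | (i, !s i) ∈ E}} := by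
        rw [← mul_sum]
        exact Nat.mul_le_mul_left _ ((card_le_card hsub).trans card_biUnion_le)
    _ ≤ ∑ _E ∈ 𝒯, 2 ^ Fintype.card ι :=
        sum_le_sum fun E _ => two_pow_mul_card_filter_forall_notMem_le E k
    _ = #𝒯 * 2 ^ Fintype.card ι := by rw [sum_const, smul_eq_mul]

theorem two_pow_mul_card_missHitPairs_le {𝒜 : Finset (Finset α)} {d : ℕ} (h𝒜 : 𝒜.vcDim ≤ d)
    (k : ℕ) :
    2 ^ k * #(missHitPairs (ι := ι) 𝒜 k) ≤
      (d + 1) * (2 * Fintype.card ι + 1) ^ d * (Fintype.card α ^ Fintype.card ι) ^ 2 := by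
  set Y := missHitPairs (ι := ι) 𝒜 k
  have hswap : ∀ s : ι → Bool, #{g | swapSamples s g ∈ Y} = #Y := fun s =>
    card_nbij' (swapSamples s) (swapSamples s) (fun g hg => (mem_filter.1 hg).2)
      (fun g hg => by simpa [swapSamples_involutive s g] using hg)
      (fun g _ => swapSamples_involutive s g) (fun g _ => swapSamples_involutive s g)
  have htraces : ∀ g : (ι → α) × (ι → α),
      #(𝒜.image fun A => ({p | joinSamples g p ∈ A} : Finset (ι × Bool))) ≤
        (d + 1) * (2 * Fintype.card ι + 1) ^ d := fun g => by
    simpa [mul_comm] using card_image_filter_mem_le (joinSamples g) h𝒜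
  refine Nat.le_of_mul_le_mul_left ?_ (pow_pos two_pos (Fintype.card ι))
  calc 2 ^ Fintype.card ι * (2 ^ k * #Y) = ∑ s : ι → Bool, 2 ^ k * #{g | swapSamples s g ∈ Y} := by
        simp [hswap, card_univ]
    _ = ∑ g : (ι → α) × (ι → α), 2 ^ k * #{s : ι → Bool | swapSamples s g ∈ Y} := by
        simp_rw [card_filter, mul_sum]
        exact sum_comm
    _ ≤ ∑ _g : (ι → α) × (ι → α), (d + 1) * (2 * Fintype.card ι + 1) ^ d * 2 ^ Fintype.card ι :=
        sum_le_sum fun g _ => (two_pow_mul_card_filter_swapSamples_mem_le 𝒜 k g).trans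
          (Nat.mul_le_mul_right _ (htraces g))
    _ = _ := by simp [card_univ]; ring

theorem card_mul_le_two_mul_card_missHitPairs [Nonempty α] {𝒜 : Finset (Finset α)} {c k : ℕ}
    (hk : 2 * c * k ≤ Fintype.card ι) (h𝒜 : ∀ A ∈ 𝒜, Fintype.card α ≤ c * #A) :
    #{g : ι → α | ∃ A ∈ 𝒜, ∀ i, g i ∉ A} * Fintype.card α ^ Fintype.card ι ≤
      2 * c * #(missHitPairs (ι := ι) 𝒜 k) := by
  have hfiber : ∀ g₁ ∈ ({g | ∃ A ∈ 𝒜, ∀ i, g i ∉ A} : Finset (ι → α)),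
      Fintype.card α ^ Fintype.card ι ≤ 2 * c * #{g₂ | (g₁, g₂) ∈ missHitPairs 𝒜 k} := by
    intro g₁ hg₁
    obtain ⟨A, hA, hmiss⟩ := (mem_filter.1 hg₁).2
    refine (card_pow_le_two_mul_card_filter_le_card_filter_apply_mem hk (h𝒜 A hA)).trans ?_
    gcongr with g₂
    exact fun hg₂ => by simpa [missHitPairs] using ⟨A, hA, hmiss, hg₂⟩
  calc _ = ∑ _g₁ ∈ ({g | ∃ A ∈ 𝒜, ∀ i, g i ∉ A} : Finset (ι → α)),
        Fintype.card α ^ Fintype.card ι := by rw [sum_const, smul_eq_mul]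
    _ ≤ ∑ g₁ ∈ ({g | ∃ A ∈ 𝒜, ∀ i, g i ∉ A} : Finset (ι → α)),
        2 * c * #{g₂ | (g₁, g₂) ∈ missHitPairs 𝒜 k} := sum_le_sum hfiber
    _ ≤ ∑ g₁ : ι → α, 2 * c * #{g₂ | (g₁, g₂) ∈ missHitPairs 𝒜 k} :=
        sum_le_sum_of_subset (subset_univ _)
    _ = 2 * c * #(missHitPairs (ι := ι) 𝒜 k) := by
        rw [← mul_sum]
        congr 1
        simp_rw [card_filter]
        rw [← Fintype.sum_prod_type']
        simp

theorem card_filter_exists_forall_notMem_lt [Nonempty α] {𝒜 : Finset (Finset α)} {c d k : ℕ}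
    (h𝒜 : 𝒜.vcDim ≤ d) (hA : ∀ A ∈ 𝒜, Fintype.card α ≤ c * #A) (hι : 2 * c * k ≤ Fintype.card ι)
    (hk : 2 * c * (d + 1) * (2 * Fintype.card ι + 1) ^ d < 2 ^ k) :
    #{g : ι → α | ∃ A ∈ 𝒜, ∀ i, g i ∉ A} < Fintype.card α ^ Fintype.card ι := by
  have hXY := card_mul_le_two_mul_card_missHitPairs (k := k) hι hA
  have hY := two_pow_mul_card_missHitPairs_le (ι := ι) h𝒜 k
  have hN : 0 < Fintype.card α ^ Fintype.card ι := pow_pos Fintype.card_pos _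
  generalize #(missHitPairs (ι := ι) 𝒜 k) = y at hXY hY
  generalize #({g : ι → α | ∃ A ∈ 𝒜, ∀ i, g i ∉ A} : Finset (ι → α)) = x at hXY ⊢
  generalize Fintype.card α ^ Fintype.card ι = N at hXY hY hN ⊢
  refine Nat.lt_of_mul_lt_mul_left (a := 2 ^ k * N) ?_
  calc 2 ^ k * N * x = 2 ^ k * (x * N) := by ring
    _ ≤ 2 ^ k * (2 * c * y) := Nat.mul_le_mul_left _ hXY
    _ = 2 * c * (2 ^ k * y) := by ring
    _ ≤ 2 * c * ((d + 1) * (2 * Fintype.card ι + 1) ^ d * N ^ 2) := Nat.mul_le_mul_left _ hY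
    _ = 2 * c * (d + 1) * (2 * Fintype.card ι + 1) ^ d * N * N := by ring
    _ < 2 ^ k * N * N := by gcongr

end DoubleSample

universe u

/-- The ε-net theorem of Haussler and Welzl, for `ε = 1 / c`. -/
theorem exists_card_le_forall_exists_mem_of_vcDim_le (c d : ℕ) :
    ∃ m : ℕ, ∀ {α : Type u} [Fintype α] [DecidableEq α] [Nonempty α] (𝒜 : Finset (Finset α)),
      𝒜.vcDim ≤ d → (∀ A ∈ 𝒜, Fintype.card α ≤ c * #A) →
      ∃ S : Finset α, #S ≤ m ∧ ∀ A ∈ 𝒜, ∃ a ∈ S, a ∈ A := by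
  obtain ⟨k, hk⟩ := Nat.exists_mul_pow_lt_two_pow (2 * c * (d + 1)) (4 * c) d
  refine ⟨2 * c * k, fun {α} _ _ _ 𝒜 h𝒜 hA => ?_⟩
  have hι : Fintype.card (Fin (2 * c * k)) = 2 * c * k := Fintype.card_fin _
  have hX := card_filter_exists_forall_notMem_lt h𝒜 hA hι.ge (by rw [hι]; convert hk using 3; ring)
  rw [← Fintype.card_fun, ← card_univ] at hX
  obtain ⟨g, -, hg⟩ := exists_mem_notMem_of_card_lt_card hX
  refine ⟨univ.image g, card_image_le.trans (by simp), fun A hA => ?_⟩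
  simp only [mem_filter, mem_univ, true_and, not_exists, not_and, not_forall, not_not] at hg
  obtain ⟨i, hi⟩ := hg A hA
  exact ⟨g i, mem_image_of_mem g (mem_univ i), hi⟩

end Finset

namespace SimpleGraph

variable {V : Type*} {G : SimpleGraph V}

theorem CliqueFree.not_adj_of_adj_of_adj (hG : G.CliqueFree 3) {u v w : V}
    (hu : G.Adj w u) (hv : G.Adj w v) : ¬ G.Adj u v :=
  fun huv => isIndepSet_neighborSet_of_triangleFree _ hG w hu hv huv.ne huv

theorem nonempty_commonNeighbors_of_maximal_cliqueFree_three
    (hG : Maximal (fun H : SimpleGraph V => H.CliqueFree 3) G) {u v : V} (hne : u ≠ v)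
    (hnadj : ¬ G.Adj u v) : (G.commonNeighbors u v).Nonempty := by
  classical
  obtain ⟨s, hus, hvs, hu, hv⟩ := exists_of_maximal_cliqueFree_not_adj hG hne hnadj
  obtain ⟨w, rfl⟩ : ∃ w, s = {w} := by
    rw [← card_eq_one]
    have := hu.card_eq
    rw [card_insert_of_notMem hus] at this
    omega
  rw [mem_singleton] at hus hvs
  have hu := hu.1
  have hv := hv.1
  push_cast at hu hv
  exact ⟨w, isClique_pair.1 hu hus, isClique_pair.1 hv hvs⟩

theorem colorable_of_forall_exists_adj (hG : G.CliqueFree 3) (S : Finset V)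
    (hS : ∀ v, ∃ s ∈ S, G.Adj v s) : G.Colorable (2 ^ #S) := by
  classical
  let C : G.Coloring (Finset S) := Coloring.mk (fun v => univ.filter fun s : S => G.Adj v s) <| by
    intro u v huv hC
    obtain ⟨s, hs, hus⟩ := hS u
    have : (⟨s, hs⟩ : S) ∈ univ.filter fun s : S => G.Adj v s := hC ▸ by simpa using hus
    simp only [mem_filter, mem_univ, true_and] at this
    exact hG.not_adj_of_adj_of_adj hus.symm this.symm huv
  simpa [Fintype.card_finset] using C.colorable

section Fintype

variable [Fintype V] [DecidableRel G.Adj]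

theorem ncard_neighborSet_eq_degree (v : V) : (G.neighborSet v).ncard = G.degree v := by
  rw [Set.ncard_eq_toFinset_card', ← neighborFinset_def, card_neighborFinset_eq_degree]

variable [DecidableEq V]

theorem degree_add_degree_add_degree_le (hG : G.CliqueFree 3) {u v w : V}
    (hu : G.Adj w u) (hv : G.Adj w v) :
    G.degree u + G.degree v + G.degree w ≤
      Fintype.card V + #(G.neighborFinset u ∩ G.neighborFinset v) := by
  have hdisj : Disjoint (G.neighborFinset u ∪ G.neighborFinset v) (G.neighborFinset w) := by
    rw [Finset.disjoint_left]
    simp only [mem_union, mem_neighborFinset]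
    rintro x (hx | hx) hwx
    · exact hG.not_adj_of_adj_of_adj hu.symm hx hwx
    · exact hG.not_adj_of_adj_of_adj hv.symm hx hwx
  have := card_le_univ (G.neighborFinset u ∪ G.neighborFinset v ∪ G.neighborFinset w)
  rw [card_union_of_disjoint hdisj] at this
  have := card_union_add_card_inter (G.neighborFinset u) (G.neighborFinset v)
  simp only [card_neighborFinset_eq_degree] at *
  omega

theorem lt_card_inter_neighborFinset {ε : ℝ}
    (hG : Maximal (fun H : SimpleGraph V => H.CliqueFree 3) G)
    (hdeg : ∀ v, (1 / 3 + ε) * Fintype.card V < G.degree v) {u v : V} (hne : u ≠ v)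
    (hnadj : ¬ G.Adj u v) :
    3 * ε * Fintype.card V < #(G.neighborFinset u ∩ G.neighborFinset v) := by
  obtain ⟨w, hwu, hwv⟩ := nonempty_commonNeighbors_of_maximal_cliqueFree_three hG hne hnadj
  have h := degree_add_degree_add_degree_le hG.1 hwu.symm hwv.symm
  have hu := hdeg u
  have hv := hdeg v
  have hw := hdeg w
  have : (G.degree u + G.degree v + G.degree w : ℝ) ≤
      Fintype.card V + #(G.neighborFinset u ∩ G.neighborFinset v) := by exact_mod_cast h
  linarith

theorem card_mul_le_of_shatters (hG : G.CliqueFree 3) {t : ℝ}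
    (hcodeg : ∀ u v, u ≠ v → ¬ G.Adj u v → t ≤ #(G.neighborFinset u ∩ G.neighborFinset v))
    {S : Finset V} (hS : (univ.image (G.neighborFinset ·)).Shatters S) (hS2 : 2 ≤ #S) :
    #S * t ≤ Fintype.card V := by
  have hS' : ∀ T ⊆ S, ∃ w, ∀ y ∈ S, G.Adj w y ↔ y ∈ T := fun T hT => by
    obtain ⟨_, hA, hST⟩ := hS hT
    obtain ⟨w, -, rfl⟩ := mem_image.1 hA
    exact ⟨w, fun y hy => by simp [← hST, hy]⟩
  obtain ⟨w₀, hw₀⟩ := hS' S subset_rfl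
  have hindep : ∀ x ∈ S, ∀ y ∈ S, ¬ G.Adj x y := fun x hx y hy =>
    hG.not_adj_of_adj_of_adj ((hw₀ x hx).2 hx) ((hw₀ y hy).2 hy)
  choose w hw using fun x => hS' (S.erase x) (erase_subset x S)
  have hw_adj : ∀ x, ∀ y ∈ S, y ≠ x → G.Adj (w x) y := fun x y hy hyx =>
    (hw x y hy).2 (mem_erase.2 ⟨hyx, hy⟩)
  have hw_not_adj : ∀ x ∈ S, ¬ G.Adj (w x) x := fun x hx h =>
    notMem_erase x S ((hw x x hx).1 h)
  set P : V → Finset V := fun x => G.neighborFinset (w x) ∩ G.neighborFinset x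
  have hP : ∀ x ∈ S, t ≤ #(P x) := by
    intro x hx
    obtain ⟨y, hy, hyx⟩ := S.exists_mem_ne (by omega) x
    refine hcodeg _ _ (fun h => hindep x hx y hy ?_) (hw_not_adj x hx)
    exact h ▸ hw_adj x y hy hyx
  have hPdisj : (S : Set V).PairwiseDisjoint P := by
    intro x hx y hy hxy
    simp only [Function.onFun, P, Finset.disjoint_left, mem_inter, mem_neighborFinset]
    exact fun z hz hz' => hG.not_adj_of_adj_of_adj (hw_adj y x hx hxy).symm hz.2 hz'.1
  calc #S * t = ∑ _x ∈ S, t := by rw [sum_const, nsmul_eq_mul]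
    _ ≤ ∑ x ∈ S, (#(P x) : ℝ) := sum_le_sum hP
    _ = #(S.biUnion P) := by rw [card_biUnion hPdisj]; push_cast; rfl
    _ ≤ Fintype.card V := by exact_mod_cast card_le_univ _

theorem vcDim_image_neighborFinset_le {ε : ℝ}
    (hG : Maximal (fun H : SimpleGraph V => H.CliqueFree 3) G)
    (hdeg : ∀ v, (1 / 3 + ε) * Fintype.card V < G.degree v) {d : ℕ} (hd : 1 ≤ 3 * ε * d) :
    (univ.image (G.neighborFinset ·)).vcDim ≤ d := by
  have hd0 : 1 ≤ d := Nat.one_le_iff_ne_zero.2 (by rintro rfl; norm_num at hd)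
  refine Finset.sup_le fun S hS => ?_
  rcases le_or_gt #S 1 with hS1 | hS2
  · exact hS1.trans hd0
  obtain ⟨x, -⟩ := card_pos.1 (by omega : 0 < #S)
  have hn : (0 : ℝ) < Fintype.card V := by exact_mod_cast Fintype.card_pos_iff.2 ⟨x⟩
  have h := card_mul_le_of_shatters hG.1 (fun u v hne hnadj =>
    (lt_card_inter_neighborFinset hG hdeg hne hnadj).le) (mem_shatterer.1 hS) hS2
  have hSd : (#S : ℝ) * (3 * ε) ≤ 3 * ε * d := by nlinarith
  have hε : 0 < 3 * ε := by
    by_contra! h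
    nlinarith
  have : (#S : ℝ) ≤ d := le_of_mul_le_mul_right (by linarith) hε
  exact_mod_cast this

end Fintype

end SimpleGraph

/-- **Thomassen.** For every `ε > 0` there is `r_ε` such that every triangle-free
graph with minimum degree greater than `(1/3 + ε)·v(H)` has chromatic number at
most `r_ε`. -/
theorem thomassen_chromatic (ε : ℝ) (hε : 0 < ε) :
    ∃ r : ℕ, ∀ (n : ℕ) (H : SimpleGraph (Fin n)),
      H.CliqueFree 3 →
      (∀ v : Fin n, (1 / 3 + ε) * n < ((H.neighborSet v).ncard : ℝ)) →
      H.Colorable r := by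
  classical
  set d := ⌈1 / (3 * ε)⌉₊
  have hd : 1 ≤ 3 * ε * d := by
    have := Nat.le_ceil (1 / (3 * ε))
    rwa [div_le_iff₀' (by positivity)] at this
  obtain ⟨m, hm⟩ := exists_card_le_forall_exists_mem_of_vcDim_le.{0} 3 d
  refine ⟨2 ^ m, fun n H hH hdeg => ?_⟩
  rcases isEmpty_or_nonempty (Fin n) with _ | _
  · exact .of_isEmpty _
  obtain ⟨G, hHG, hG⟩ :=
    Finite.exists_le_maximal (p := fun G : SimpleGraph (Fin n) => G.CliqueFree 3) hH
  have hdegG : ∀ v, (1 / 3 + ε) * Fintype.card (Fin n) < G.degree v := fun v => by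
    rw [Fintype.card_fin]
    refine (hdeg v).trans_le ?_
    rw [H.ncard_neighborSet_eq_degree]
    exact_mod_cast H.degree_le_of_le hHG
  have hdense : ∀ v, Fintype.card (Fin n) ≤ 3 * G.degree v := fun v => by
    have := hdegG v
    have : 0 ≤ ε * Fintype.card (Fin n) := by positivity
    exact_mod_cast (by linarith : (Fintype.card (Fin n) : ℝ) ≤ 3 * G.degree v)
  obtain ⟨S, hSm, hS⟩ := hm (univ.image (G.neighborFinset ·))
    (G.vcDim_image_neighborFinset_le hG hdegG hd) (by simpa using hdense)
  refine ((G.colorable_of_forall_exists_adj hG.1 S fun v => ?_).mono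
    (Nat.pow_le_pow_right two_pos hSm)).mono_left hHG
  simpa using hS _ (mem_image_of_mem _ (mem_univ v))
end

section
/- Let r, ℓ be natural numbers, let F be a triangle-free graph on vertex set [ℓ] which is not r-partite (i.e. has chromatic number greater than r), and let m ≥ 0. Let G be a graph whose vertex set B is partitioned into nonempty parts B_1, …, B_ℓ, all of whose edges go between parts B_i and B_j with ij an edge of F. Suppose that for every edge ij of F and all sets U ⊆ B_i, V ⊆ B_j with |U| ≥ |B_i|/r and |V| ≥ |B_j|/r, the number of edges of G between U and V is strictly greater than m. Then G cannot be made r-partite by deleting at most m edges. -/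
open MeasureTheory Filter

/-- Number of ordered pairs `(a,b) ∈ A × B` with `a` adjacent to `b`; for
disjoint `A`, `B` this is the number of edges between `A` and `B`. -/
noncomputable def edgeCount {V : Type*} (G : SimpleGraph V) (A B : Set V) : ℕ :=
  Set.ncard {q : V × V | q.1 ∈ A ∧ q.2 ∈ B ∧ G.Adj q.1 q.2}

/-- Number of edges with both ends in `A`. -/
noncomputable def edgesIn {V : Type*} (G : SimpleGraph V) (A : Set V) : ℕ :=
  Set.ncard {e ∈ G.edgeSet | ∀ v ∈ e, v ∈ A}

/-- Number of neighbours of `v` in `A`. -/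
noncomputable def degIn {V : Type*} (G : SimpleGraph V) (v : V) (A : Set V) : ℕ :=
  (G.neighborSet v ∩ A).ncard

/-!
Suppose deleting a set `S` of at most `m` edges leaves an `r`-colouring `C` of `G`. In every
part `B i` some colour class of `C` has at least `|B i| / r` vertices; call its colour `f i`.
As `F` is not `r`-colourable, `f` is not a proper colouring of `F`, so some edge `ij` of `F`
has `f i = f j`. The two large colour classes in `B i` and `B j` then carry the same colour,
so every edge of `G` between them lies in `S`, and there are more than `m` of those.
-/

theorem Finset.exists_card_div_le_card_filter_eq {α β : Type*} [Fintype β] [Nonempty β]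
    [DecidableEq β] (s : Finset α) (f : α → β) :
    ∃ k, (s.card : ℝ) / Fintype.card β ≤ (s.filter (f · = k)).card := by
  obtain ⟨k, -, hk⟩ := Finset.exists_le_card_fiber_of_nsmul_le_card_of_maps_to
    (fun a _ => Finset.mem_univ (f a)) Finset.univ_nonempty
    (b := (s.card : ℝ) / Fintype.card β)
    (by rw [nsmul_eq_mul, Finset.card_univ, mul_div_cancel₀ _ (by positivity)])
  exact ⟨k, hk⟩

theorem SimpleGraph.exists_adj_eq_of_not_colorable {V : Type*} {G : SimpleGraph V} {n : ℕ}
    (hG : ¬ G.Colorable n) (f : V → Fin n) : ∃ u v, G.Adj u v ∧ f u = f v := by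
  by_contra! h
  exact hG ⟨SimpleGraph.Coloring.mk f fun {u v} huv => h u v huv⟩

theorem SimpleGraph.Coloring.mk_mem_of_adj_of_eq {V α : Type*} {G : SimpleGraph V}
    {S : Set (Sym2 V)} (C : (G.deleteEdges S).Coloring α) {u v : V} (huv : G.Adj u v)
    (hC : C u = C v) : s(u, v) ∈ S := by
  by_contra hS
  exact C.valid (G.deleteEdges_adj.2 ⟨huv, hS⟩) hC

theorem edgeCount_le_card {V : Type*} (G : SimpleGraph V) {U W : Set V} (hUW : Disjoint U W)
    (S : Finset (Sym2 V)) (hS : ∀ u ∈ U, ∀ w ∈ W, G.Adj u w → s(u, w) ∈ S) :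
    edgeCount G U W ≤ S.card := by
  rw [← Set.ncard_coe_finset]
  refine Set.ncard_le_ncard_of_injOn (fun q => s(q.1, q.2))
    (fun q ⟨hu, hw, hadj⟩ => hS _ hu _ hw hadj) ?_ S.finite_toSet
  rintro ⟨u, w⟩ ⟨hu, hw, -⟩ ⟨u', w'⟩ ⟨-, hw', -⟩ h
  rcases Sym2.eq_iff.1 h with ⟨rfl, rfl⟩ | ⟨rfl, -⟩
  · rfl
  · exact (hUW.ne_of_mem hu hw' rfl).elim

theorem blowup_far_from_rpartite_general {α : Type*}
    (r ℓ : ℕ) (F : SimpleGraph (Fin ℓ))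
    (hFr : ¬ F.Colorable r) (m : ℕ)
    (G : SimpleGraph α) (B : Fin ℓ → Finset α)
    (hBne : ∀ i, (B i).Nonempty)
    (hBdisj : ∀ i j, i ≠ j → Disjoint (B i) (B j))
    (hdense : ∀ i j, F.Adj i j → ∀ U ⊆ B i, ∀ V ⊆ B j,
      ((B i).card : ℝ) / r ≤ (U.card : ℝ) → ((B j).card : ℝ) / r ≤ (V.card : ℝ) →
      m < edgeCount G ↑U ↑V) :
    ¬ ∃ S : Finset (Sym2 α), ↑S ⊆ G.edgeSet ∧ S.card ≤ m ∧
        (G.deleteEdges ↑S).Colorable r := by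
  rintro ⟨S, -, hSm, ⟨C⟩⟩
  have hlarge (i : Fin ℓ) : ∃ k, ((B i).card : ℝ) / r ≤ ((B i).filter (C · = k)).card := by
    obtain ⟨v, -⟩ := hBne i
    have : Nonempty (Fin r) := ⟨C v⟩
    simpa using (B i).exists_card_div_le_card_filter_eq C
  choose f hf using hlarge
  obtain ⟨i, j, hij, hfij⟩ := F.exists_adj_eq_of_not_colorable hFr f
  have hfew : edgeCount G ↑((B i).filter (C · = f i)) ↑((B j).filter (C · = f j)) ≤ S.card := by
    refine edgeCount_le_card G ?_ S fun u hu w hw huw => C.mk_mem_of_adj_of_eq huw ?_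
    · exact Finset.disjoint_coe.2 <|
        (hBdisj i j hij.ne).mono (Finset.filter_subset _ _) (Finset.filter_subset _ _)
    · rw [Finset.mem_coe, Finset.mem_filter] at hu hw
      rw [hu.2, hw.2, hfij]
  have hmany := hdense i j hij _ (Finset.filter_subset _ _) _ (Finset.filter_subset _ _)
    (hf i) (hf j)
  omega

/-- **Claim 3.2** (deterministic form). If `F` is triangle-free and not
`r`-partite, `G` has all edges between parts `B_i, B_j` with `ij ∈ F`, and every
pair of large subsets of parts joined by an `F`-edge spans more than `m` edges,
then `G` cannot be made `r`-partite by deleting at most `m` edges. -/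
theorem blowup_far_from_rpartite {α : Type*} [Fintype α] [DecidableEq α]
    (r ℓ : ℕ) (F : SimpleGraph (Fin ℓ)) (hF3 : F.CliqueFree 3)
    (hFr : ¬ F.Colorable r) (m : ℕ)
    (G : SimpleGraph α) (B : Fin ℓ → Finset α)
    (hBne : ∀ i, (B i).Nonempty)
    (hBdisj : ∀ i j, i ≠ j → Disjoint (B i) (B j))
    (hBcover : ∀ v : α, ∃ i, v ∈ B i)
    (hGedges : ∀ u v : α, G.Adj u v → ∃ i j, F.Adj i j ∧ u ∈ B i ∧ v ∈ B j)
    (hdense : ∀ i j, F.Adj i j → ∀ U ⊆ B i, ∀ V ⊆ B j,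
      ((B i).card : ℝ) / r ≤ (U.card : ℝ) → ((B j).card : ℝ) / r ≤ (V.card : ℝ) →
      m < edgeCount G ↑U ↑V) :
    ¬ ∃ S : Finset (Sym2 α), ↑S ⊆ G.edgeSet ∧ S.card ≤ m ∧
        (G.deleteEdges ↑S).Colorable r :=
  blowup_far_from_rpartite_general r ℓ F hFr m G B hBne hBdisj hdense
end

section
/- For any 0 < ε < 1/2, any M ∈ ℕ, and any function p : ℕ → (0,1) with p(n)·n/ln n → ∞, the random graph Γ = G(n, p(n)) asymptotically almost surely has the following property: for any two subsets A, B of V(Γ) with |A|, |B| ≥ n/M, all but at most 10³·M·ε⁻²·p⁻¹·n edges uv of Γ satisfy all of: deg_Γ(u,A) = (1 ± ε)p|A| and deg_Γ(v,A) = (1 ± ε)p|A|; deg_Γ(u,B) = (1 ± ε)p|B| and deg_Γ(v,B) = (1 ± ε)p|B|; and deg_Γ(u,v,B) ≥ (1−ε)·p²·|B|. -/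
open MeasureTheory Filter

/-- The graph on `Fin n` determined by a boolean function on potential edges. -/
def graphOfFlip {n : ℕ} (ω : Sym2 (Fin n) → Bool) : SimpleGraph (Fin n) where
  Adj u v := u ≠ v ∧ ω s(u, v) = true
  symm := by
    constructor
    intro u v h
    exact ⟨h.1.symm, by rw [Sym2.eq_swap]; exact h.2⟩
  loopless := by constructor; intro u h; exact h.1 rfl

/-- The binomial random graph measure `G(n,p)`: the product over the 2-element
subsets of `[n]` of Bernoulli measures with parameter `p`. -/
noncomputable def gnp (n : ℕ) (p : ℝ) : Measure (Sym2 (Fin n) → Bool) :=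
  Measure.pi fun _ =>
    (PMF.bernoulli (min (Real.toNNReal p) 1) (min_le_right _ _)).toMeasure

/-!
Outside the sparse regime `q²n ≤ 500 M/ε²`, where `G` has at most `q n² ≤ 10³ M ε⁻² q⁻¹ n`
edges altogether, three events of probability `1 - o(1)` make the count deterministic:
`LowerDense` and `UpperSparse` (edge counts `(1 ± δ) q |S| |T|` between all sets with
`|S| ≳ M/(ε² q)` and `|T| ≥ n/M`), and `CodegreeDense` (the same lower bound for `S`, `T` inside
a neighbourhood `N(u)`, with `|T| ≳ q n/M`). The first two follow from Chernoff bounds and a union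
bound over the `4ⁿ` pairs `(S, T)`. For the third the Chernoff exponent is only of order `q n`,
but asking `u` to be adjacent to all of `S ∪ T` costs a factor `q ^ |S ∪ T|`, which pays for the
union bound.

On these events only `O(M/(ε² q))` vertices have atypical degree into `A` or `B`, since
the degrees of such vertices would add up to an edge count between them and `A` (or `B`)
contradicting the density estimates. For any other vertex `u`, `CodegreeDense` applied to
`T = N(u) ∩ B` leaves only `O(M/(ε² q))` neighbours `v` with a small common neighbourhood
in `B`. Every atypical edge contains an atypical vertex or is one of these pairs `uv`, so there
are `O(M n/(ε² q))` of them.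
-/

open ProbabilityTheory Finset

namespace GnpTypical

section BernoulliProduct

variable {ι : Type*} [Fintype ι] {μ : ι → Measure Bool} [∀ i, IsProbabilityMeasure (μ i)]
  {q : ℝ}

lemma measureReal_false_eq_one_sub {ν : Measure Bool} [IsProbabilityMeasure ν]
    (h : ν.real {true} = q) : ν.real {false} = 1 - q := by
  rw [← h, ← probReal_compl_eq_one_sub (measurableSet_singleton _)]
  congr 1
  ext b
  simp

lemma integral_pi_prod_bool (hμ : ∀ i, (μ i).real {true} = q) (f : ι → Bool → ℝ) :
    ∫ ω, ∏ i, f i (ω i) ∂Measure.pi μ = ∏ i, ((1 - q) * f i false + q * f i true) := by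
  rw [integral_fintype_prod_eq_prod]
  refine prod_congr rfl fun i _ => ?_
  rw [integral_fintype .of_finite, Fintype.sum_bool, measureReal_false_eq_one_sub (hμ i), hμ i,
    smul_eq_mul, smul_eq_mul]
  ring

lemma measureReal_pi_forall_true_inter (hμ : ∀ i, (μ i).real {true} = q) (J : Finset ι)
    {Q : Set (ι → Bool)} (hQ : ∀ ω ω', (∀ i ∉ J, ω i = ω' i) → ω ∈ Q → ω' ∈ Q) :
    (Measure.pi μ).real ({ω | ∀ i ∈ J, ω i = true} ∩ Q) = q ^ #J * (Measure.pi μ).real Q := by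
  classical
  set e := MeasurableEquiv.piEquivPiSubtypeProd (fun _ : ι => Bool) (· ∈ J)
  have he := measurePreserving_piEquivPiSubtypeProd μ (· ∈ J)
  set Q' : Set ({i // i ∉ J} → Bool) := {b | e.symm (fun _ => true, b) ∈ Q}
  have hQ' : ∀ ω a, ω ∈ Q ↔ e.symm (a, (e ω).2) ∈ Q := fun ω a =>
    ⟨hQ _ _ fun i hi => by simp [e, hi], hQ _ _ fun i hi => by simp [e, hi]⟩
  have hinter : {ω | ∀ i ∈ J, ω i = true} ∩ Q
      = e ⁻¹' (Set.univ.pi (fun _ => {true}) ×ˢ Q') := by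
    ext ω
    simp only [Set.mem_inter_iff, Set.mem_ofPred_eq, Set.mem_preimage, Set.mem_prod,
      Set.mem_pi, Set.mem_univ, Set.mem_singleton_iff, true_implies, Q', ← hQ']
    exact and_congr_left' ⟨fun h i => h i i.2, fun h i hi => h ⟨i, hi⟩⟩
  have hQeq : Q = e ⁻¹' (Set.univ ×ˢ Q') := by
    ext ω
    simp only [Set.mem_preimage, Set.mem_prod, Set.mem_univ, true_and, Q', Set.mem_ofPred_eq]
    exact hQ' ω _
  conv_rhs => rw [hQeq]
  rw [hinter, he.measureReal_preimage MeasurableSet.of_discrete.nullMeasurableSet,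
    he.measureReal_preimage MeasurableSet.of_discrete.nullMeasurableSet,
    measureReal_prod_prod, measureReal_prod_prod, probReal_univ, one_mul]
  congr 1
  simp only [measureReal_def, Measure.pi_pi, ENNReal.toReal_prod]
  simp only [← measureReal_def, hμ, prod_const]
  congr 1
  simp

noncomputable def weightedCount (w : ι → ℝ) (ω : ι → Bool) : ℝ := ∑ i, if ω i then w i else 0

lemma exp_mul_weightedCount (w : ι → ℝ) (t : ℝ) (ω : ι → Bool) :
    Real.exp (t * weightedCount w ω) = ∏ i, if ω i then Real.exp (t * w i) else 1 := by
  rw [weightedCount, mul_sum, Real.exp_sum]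
  exact prod_congr rfl fun i _ => by split_ifs <;> simp

lemma mgf_weightedCount (hμ : ∀ i, (μ i).real {true} = q) (w : ι → ℝ) (t : ℝ) :
    mgf (weightedCount w) (Measure.pi μ) t = ∏ i, (1 - q + q * Real.exp (t * w i)) := by
  simp only [mgf, exp_mul_weightedCount]
  rw [integral_pi_prod_bool hμ (fun i b => if b then Real.exp (t * w i) else 1)]
  simp

lemma exp_le_one_add_add_sq {x : ℝ} (hx : |x| ≤ 1) : Real.exp x ≤ 1 + x + 3 / 4 * x ^ 2 := by
  have h := Real.exp_bound hx (n := 2) two_pos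
  norm_num [Finset.sum_range_succ, Nat.factorial, sq_abs] at h
  linarith [(abs_le.1 h).2]

lemma one_sub_add_mul_exp_le {w t : ℝ} (hq0 : 0 ≤ q) (hw0 : 0 ≤ w) (hw2 : w ≤ 2)
    (ht : |t| ≤ 1 / 2) :
    1 - q + q * Real.exp (t * w) ≤ Real.exp (q * w * (t + 3 / 2 * t ^ 2)) := by
  have htw : |t * w| ≤ 1 := by
    rw [abs_mul, abs_of_nonneg hw0]
    nlinarith [abs_nonneg t]
  have hexp : Real.exp (t * w) ≤ 1 + w * (t + 3 / 2 * t ^ 2) := by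
    nlinarith [exp_le_one_add_add_sq htw,
      mul_nonneg (mul_nonneg (sq_nonneg t) hw0) (sub_nonneg.2 hw2)]
  nlinarith [Real.add_one_le_exp (q * w * (t + 3 / 2 * t ^ 2))]

lemma mgf_weightedCount_le (hμ : ∀ i, (μ i).real {true} = q) (hq0 : 0 ≤ q) (hq1 : q ≤ 1)
    {w : ι → ℝ} (hw : ∀ i, 0 ≤ w i ∧ w i ≤ 2) {t : ℝ} (ht : |t| ≤ 1 / 2) :
    mgf (weightedCount w) (Measure.pi μ) t
      ≤ Real.exp (q * (t + 3 / 2 * t ^ 2) * ∑ i, w i) := by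
  rw [mgf_weightedCount hμ, mul_sum, Real.exp_sum]
  refine prod_le_prod (fun i _ => ?_) fun i _ => ?_
  · nlinarith [Real.exp_pos (t * w i)]
  · exact (one_sub_add_mul_exp_le hq0 (hw i).1 (hw i).2 ht).trans_eq (by ring_nf)

lemma measureReal_weightedCount_le_le (hμ : ∀ i, (μ i).real {true} = q) (hq0 : 0 ≤ q)
    (hq1 : q ≤ 1) {w : ι → ℝ} (hw : ∀ i, 0 ≤ w i ∧ w i ≤ 2) {δ : ℝ} (hδ0 : 0 ≤ δ)
    (hδ1 : δ ≤ 1) :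
    (Measure.pi μ).real {ω | weightedCount w ω ≤ (1 - δ) * q * ∑ i, w i}
      ≤ Real.exp (-(δ ^ 2 * q * (∑ i, w i) / 6)) := by
  have ht : |-(δ / 3)| ≤ 1 / 2 := by rw [abs_neg, abs_of_nonneg (by positivity)]; linarith
  calc _ ≤ Real.exp (-(-(δ / 3)) * ((1 - δ) * q * ∑ i, w i))
        * mgf (weightedCount w) (Measure.pi μ) (-(δ / 3)) :=
      measure_le_le_exp_mul_mgf _ (by linarith) .of_finite
    _ ≤ Real.exp (-(-(δ / 3)) * ((1 - δ) * q * ∑ i, w i))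
        * Real.exp (q * (-(δ / 3) + 3 / 2 * (-(δ / 3)) ^ 2) * ∑ i, w i) := by
      gcongr
      exact mgf_weightedCount_le hμ hq0 hq1 hw ht
    _ = _ := by rw [← Real.exp_add]; ring_nf

lemma measureReal_le_weightedCount_le (hμ : ∀ i, (μ i).real {true} = q) (hq0 : 0 ≤ q)
    (hq1 : q ≤ 1) {w : ι → ℝ} (hw : ∀ i, 0 ≤ w i ∧ w i ≤ 2) {δ : ℝ} (hδ0 : 0 ≤ δ)
    (hδ1 : δ ≤ 1) :
    (Measure.pi μ).real {ω | (1 + δ) * q * ∑ i, w i ≤ weightedCount w ω}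
      ≤ Real.exp (-(δ ^ 2 * q * (∑ i, w i) / 6)) := by
  have ht : |δ / 3| ≤ 1 / 2 := by rw [abs_of_nonneg (by positivity)]; linarith
  calc _ ≤ Real.exp (-(δ / 3) * ((1 + δ) * q * ∑ i, w i))
        * mgf (weightedCount w) (Measure.pi μ) (δ / 3) :=
      measure_ge_le_exp_mul_mgf _ (by positivity) .of_finite
    _ ≤ Real.exp (-(δ / 3) * ((1 + δ) * q * ∑ i, w i))
        * Real.exp (q * (δ / 3 + 3 / 2 * (δ / 3) ^ 2) * ∑ i, w i) := by
      gcongr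
      exact mgf_weightedCount_le hμ hq0 hq1 hw ht
    _ = _ := by rw [← Real.exp_add]; ring_nf

end BernoulliProduct

section UnionBound

lemma four_le_exp_three_halves : (4 : ℝ) ≤ Real.exp (3 / 2) := by
  rw [show (3 / 2 : ℝ) = 1 + 1 / 2 by norm_num, Real.exp_add]
  nlinarith [Real.exp_one_gt_d9, Real.add_one_le_exp (1 / 2 : ℝ), Real.exp_pos 1]

lemma measureReal_exists_pair_le {Ω V : Type*} [MeasurableSpace Ω] [Fintype V] {μ : Measure Ω}
    [IsFiniteMeasure μ] (P : Finset V → Finset V → Prop) (F : Finset V → Finset V → Set Ω)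
    (h : ∀ S T, P S T → μ.real (F S T) ≤ Real.exp (-(2 * Fintype.card V))) :
    μ.real {ω | ∃ S T, P S T ∧ ω ∈ F S T} ≤ Real.exp (-(Fintype.card V / 2)) := by
  classical
  have hsub : {ω | ∃ S T, P S T ∧ ω ∈ F S T}
      ⊆ ⋃ x ∈ (univ.filter fun x : Finset V × Finset V => P x.1 x.2), F x.1 x.2 := by
    rintro ω ⟨S, T, hST, hω⟩
    exact Set.mem_biUnion (x := (S, T)) (mem_filter.2 ⟨mem_univ _, hST⟩) hω
  calc _ ≤ ∑ x ∈ (univ.filter fun x : Finset V × Finset V => P x.1 x.2), μ.real (F x.1 x.2) :=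
        (measureReal_mono hsub (measure_ne_top _ _)).trans (measureReal_biUnion_finset_le _ _)
    _ ≤ ∑ _x : Finset V × Finset V, Real.exp (-(2 * Fintype.card V)) :=
        (sum_le_sum fun x hx => h _ _ (mem_filter.1 hx).2).trans
          (sum_le_sum_of_subset_of_nonneg (filter_subset _ _) fun _ _ _ => by positivity)
    _ = 4 ^ Fintype.card V * Real.exp (-(2 * Fintype.card V)) := by
        rw [sum_const, card_univ, Fintype.card_prod, Fintype.card_finset, nsmul_eq_mul]
        push_cast
        rw [← mul_pow]
        norm_num
    _ ≤ Real.exp (3 / 2) ^ Fintype.card V * Real.exp (-(2 * Fintype.card V)) := by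
        gcongr
        exact four_le_exp_three_halves
    _ = Real.exp (-(Fintype.card V / 2)) := by
        rw [← Real.exp_nat_mul, ← Real.exp_add]
        ring_nf

lemma sum_prod_mul_prod_compl {α R : Type*} [Fintype α] [DecidableEq α] [CommSemiring R]
    (a b : α → R) : ∑ T : Finset α, (∏ v ∈ T, a v) * ∏ v ∈ Tᶜ, b v = ∏ v, (a v + b v) := by
  simp [prod_add, compl_eq_univ_sdiff]

lemma sum_sum_pow_card_union {α R : Type*} [Fintype α] [DecidableEq α] [CommSemiring R]
    (x : R) : ∑ S : Finset α, ∑ T : Finset α, x ^ #(S ∪ T) = (1 + 3 * x) ^ Fintype.card α := by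
  have hunion : ∀ S T : Finset α,
      x ^ #(S ∪ T) = (∏ _v ∈ T, x) * ∏ v ∈ Tᶜ, if v ∈ S then x else 1 := by
    intro S T
    rw [prod_ite_mem, prod_const, prod_const, ← pow_add, ← card_union_of_disjoint]
    · congr 2
      ext v
      simp only [mem_union, mem_inter, mem_compl]
      tauto
    · exact disjoint_left.2 fun v hv hv' => (mem_compl.1 (mem_inter.1 hv').1) hv
  have hS : ∀ S : Finset α, ∏ v, (x + if v ∈ S then x else 1)
      = (∏ _v ∈ S, 2 * x) * ∏ _v ∈ Sᶜ, (1 + x) := by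
    intro S
    rw [← prod_mul_prod_compl S]
    congr 1
    · exact prod_congr rfl fun v hv => by rw [if_pos hv, two_mul]
    · exact prod_congr rfl fun v hv => by rw [if_neg (mem_compl.1 hv), add_comm]
  simp_rw [hunion, sum_prod_mul_prod_compl, hS, sum_prod_mul_prod_compl, prod_const, card_univ]
  ring_nf

end UnionBound

section Deterministic

variable {V : Type*} (G : SimpleGraph V) [DecidableRel G.Adj]

lemma card_interedges_eq_sum (S T : Finset V) :
    #(G.interedges S T) = ∑ u ∈ S, #{v ∈ T | G.Adj u v} := by
  rw [SimpleGraph.interedges_def, card_filter, sum_product]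
  exact sum_congr rfl fun u _ => (card_filter _ _).symm

lemma card_mul_le_card_top_interedges_add [DecidableEq V] (S T : Finset V) :
    #S * #T ≤ #((⊤ : SimpleGraph V).interedges S T) + #S := by
  have hdiag : #{x ∈ S ×ˢ T | x.1 = x.2} ≤ #S :=
    card_le_card_of_injOn Prod.fst (fun x hx => (mem_product.1 (mem_filter.1 hx).1).1)
      fun x hx y hy hxy => Prod.ext hxy <| by
        rw [← (mem_filter.1 hx).2, ← (mem_filter.1 hy).2, hxy]
  have hsplit := card_filter_add_card_filter_not (s := S ×ˢ T) (fun x => x.1 = x.2)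
  rw [card_product] at hsplit
  simp only [SimpleGraph.interedges_def, SimpleGraph.top_adj, ne_eq]
  omega

lemma mul_le_card_top_interedges [DecidableEq V] {q δ s t : ℝ} (hq : 0 ≤ q) (ht8 : 8 ≤ t)
    {S T : Finset V} (hS : s ≤ #S) (hT : t ≤ #T) :
    7 / 48 * δ ^ 2 * q * s * t ≤ δ ^ 2 * q * #((⊤ : SimpleGraph V).interedges S T) / 6 := by
  have h : ((#S : ℝ) * #T) ≤ #((⊤ : SimpleGraph V).interedges S T) + #S := by
    exact_mod_cast card_mul_le_card_top_interedges_add S T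
  have h' : 7 / 8 * (s * t) ≤ #((⊤ : SimpleGraph V).interedges S T) := by
    nlinarith [mul_le_mul hS hT (by linarith) (Nat.cast_nonneg #S), Nat.cast_nonneg (α := ℝ) #S]
  nlinarith [mul_le_mul_of_nonneg_left h' (by positivity : 0 ≤ δ ^ 2 * q / 6)]

def LowerDense [DecidableEq V] (q δ s t : ℝ) : Prop :=
  ∀ S T : Finset V, s ≤ #S → t ≤ #T →
    (1 - δ) * q * #((⊤ : SimpleGraph V).interedges S T) ≤ #(G.interedges S T)

def UpperSparse (q δ s t : ℝ) : Prop :=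
  ∀ S T : Finset V, s ≤ #S → t ≤ #T → #(G.interedges S T) ≤ (1 + δ) * q * (#S * #T)

def CodegreeDense [DecidableEq V] (q δ s t : ℝ) : Prop :=
  ∀ u, ∀ S T : Finset V, u ∉ S → u ∉ T → s ≤ #S → t ≤ #T → (∀ v ∈ S ∪ T, G.Adj u v) →
    (1 - δ) * q * #((⊤ : SimpleGraph V).interedges S T) ≤ #(G.interedges S T)

variable {G} {q δ c s t : ℝ} {S T : Finset V}

lemma eq_empty_of_forall_card_lt [DecidableEq V] (hq : 0 ≤ q) (hδ : δ ≤ 1)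
    (hdense : (1 - δ) * q * #((⊤ : SimpleGraph V).interedges S T) ≤ #(G.interedges S T))
    (hc : c ≤ (1 - δ) * q * (#T - 1)) (hS : ∀ u ∈ S, (#{v ∈ T | G.Adj u v} : ℝ) < c) :
    S = ∅ := by
  by_contra hne
  have hsum : (#(G.interedges S T) : ℝ) < #S * c := by
    rw [card_interedges_eq_sum, Nat.cast_sum]
    simpa using sum_lt_sum_of_nonempty (nonempty_iff_ne_empty.2 hne) hS
  have htop : (#S : ℝ) * (#T - 1) ≤ #((⊤ : SimpleGraph V).interedges S T) := by
    have := card_mul_le_card_top_interedges_add S T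
    rw [mul_sub, mul_one, sub_le_iff_le_add]
    exact_mod_cast this
  have hcS := mul_le_mul_of_nonneg_left hc (Nat.cast_nonneg #S)
  nlinarith [mul_le_mul_of_nonneg_left htop (mul_nonneg (sub_nonneg.2 hδ) hq)]

lemma eq_empty_of_forall_lt_card
    (hsparse : #(G.interedges S T) ≤ (1 + δ) * q * (#S * #T))
    (hS : ∀ u ∈ S, (1 + δ) * q * #T < (#{v ∈ T | G.Adj u v} : ℝ)) : S = ∅ := by
  by_contra hne
  have hsum : (#S : ℝ) * ((1 + δ) * q * #T) < #(G.interedges S T) := by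
    rw [card_interedges_eq_sum, Nat.cast_sum]
    simpa using sum_lt_sum_of_nonempty (nonempty_iff_ne_empty.2 hne) hS
  linarith

lemma LowerDense.card_filter_lt [Fintype V] [DecidableEq V] (h : LowerDense G q δ s t)
    (hq : 0 ≤ q) (hδ : δ ≤ 1) (hs : 0 < s) (hT : t ≤ #T) (hc : c ≤ (1 - δ) * q * (#T - 1)) :
    (#{u | (#{v ∈ T | G.Adj u v} : ℝ) < c} : ℝ) < s := by
  by_contra! hS
  have := eq_empty_of_forall_card_lt hq hδ (h _ T hS hT) hc fun u hu => (mem_filter.1 hu).2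
  rw [this, card_empty, Nat.cast_zero] at hS
  linarith

lemma UpperSparse.card_filter_lt [Fintype V] (h : UpperSparse G q δ s t) (hs : 0 < s)
    (hT : t ≤ #T) : (#{u | (1 + δ) * q * #T < (#{v ∈ T | G.Adj u v} : ℝ)} : ℝ) < s := by
  by_contra! hS
  have := eq_empty_of_forall_lt_card (h _ T hS hT) fun u hu => (mem_filter.1 hu).2
  rw [this, card_empty, Nat.cast_zero] at hS
  linarith

lemma CodegreeDense.card_filter_lt [Fintype V] [DecidableEq V] (h : CodegreeDense G q δ s t)
    (hq : 0 ≤ q) (hδ : δ ≤ 1) (hs : 0 < s) {u : V} (hu : t ≤ #{w ∈ T | G.Adj u w})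
    (hc : c ≤ (1 - δ) * q * (#{w ∈ T | G.Adj u w} - 1)) :
    (#{v | G.Adj u v ∧ (#{w ∈ {w ∈ T | G.Adj u w} | G.Adj v w} : ℝ) < c} : ℝ) < s := by
  by_contra! hS
  have hdense := h u _ _ (by simp) (by simp) hS hu fun v hv => by
    rcases mem_union.1 hv with hv | hv
    exacts [(mem_filter.1 hv).2.1, (mem_filter.1 hv).2]
  have := eq_empty_of_forall_card_lt hq hδ hdense hc fun v hv => (mem_filter.1 hv).2.2
  rw [this, card_empty, Nat.cast_zero] at hS
  linarith

lemma ncard_le_of_forall_eq_mk [Fintype V] [DecidableEq V] {E : Set (Sym2 V)} (U : Finset V)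
    (P : V → Finset V) {b : ℝ} (hb : 0 ≤ b) (hP : ∀ u ∉ U, (#(P u) : ℝ) ≤ b)
    (hE : ∀ e ∈ E, ∃ u v, e = s(u, v) ∧ (u ∈ U ∨ v ∈ P u)) :
    (E.ncard : ℝ) ≤ #U * Fintype.card V + Fintype.card V * b := by
  set F : V → Finset (Sym2 V) := fun u =>
    if u ∈ U then univ.image (fun v => s(u, v)) else (P u).image (fun v => s(u, v))
  have hsub : E ⊆ ↑(univ.biUnion F) := by
    intro e he
    obtain ⟨u, v, rfl, huv⟩ := hE e he
    refine mem_coe.2 (mem_biUnion.2 ⟨u, mem_univ u, ?_⟩)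
    by_cases hu : u ∈ U
    · simp [F, hu]
    · simp only [F, if_neg hu]
      exact mem_image_of_mem _ (huv.resolve_left hu)
  have hF : ∀ u, (#(F u) : ℝ) ≤ (if u ∈ U then (Fintype.card V : ℝ) else 0) + b := by
    intro u
    by_cases hu : u ∈ U
    · simp only [F, if_pos hu]
      have : #(univ.image fun v => s(u, v)) ≤ Fintype.card V := card_image_le
      push_cast [ge_iff_le]
      linarith [(Nat.cast_le (α := ℝ)).2 this]
    · simp only [F, if_neg hu, zero_add]
      exact (Nat.cast_le.2 card_image_le).trans (hP u hu)
  calc (E.ncard : ℝ) ≤ #(univ.biUnion F) := by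
        exact_mod_cast (Set.ncard_le_ncard hsub (finite_toSet _)).trans_eq (Set.ncard_coe_finset _)
    _ ≤ ∑ u, (#(F u) : ℝ) := by exact_mod_cast card_biUnion_le
    _ ≤ ∑ u, ((if u ∈ U then (Fintype.card V : ℝ) else 0) + b) := sum_le_sum fun u _ => hF u
    _ = #U * Fintype.card V + Fintype.card V * b := by
      rw [sum_add_distrib, sum_ite_mem, univ_inter, sum_const, sum_const, card_univ]
      simp [nsmul_eq_mul]

end Deterministic

section Typical

variable {V : Type*}

def IsTypicalPair (G : SimpleGraph V) (q ε : ℝ) (A B : Set V) (u v : V) : Prop :=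
  ((1 - ε) * q * A.ncard ≤ (degIn G u A : ℝ) ∧ (degIn G u A : ℝ) ≤ (1 + ε) * q * A.ncard) ∧
  ((1 - ε) * q * A.ncard ≤ (degIn G v A : ℝ) ∧ (degIn G v A : ℝ) ≤ (1 + ε) * q * A.ncard) ∧
  ((1 - ε) * q * B.ncard ≤ (degIn G u B : ℝ) ∧ (degIn G u B : ℝ) ≤ (1 + ε) * q * B.ncard) ∧
  ((1 - ε) * q * B.ncard ≤ (degIn G v B : ℝ) ∧ (degIn G v B : ℝ) ≤ (1 + ε) * q * B.ncard) ∧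
  (1 - ε) * q ^ 2 * B.ncard ≤ ((G.neighborSet u ∩ G.neighborSet v ∩ B).ncard : ℝ)

def atypicalEdges (G : SimpleGraph V) (q ε : ℝ) (A B : Set V) : Set (Sym2 V) :=
  {e | e ∈ G.edgeSet ∧ ∃ u v : V, e = s(u, v) ∧ ¬ IsTypicalPair G q ε A B u v}

noncomputable def degreeOutliers [Fintype V] (G : SimpleGraph V) [DecidableRel G.Adj]
    (q δ : ℝ) (X : Finset V) : Finset V :=
  {u | ¬ ((1 - δ) * q * #X ≤ (#{v ∈ X | G.Adj u v} : ℝ) ∧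
    (#{v ∈ X | G.Adj u v} : ℝ) ≤ (1 + δ) * q * #X)}

noncomputable def lowCodegreeNeighbors [Fintype V] (G : SimpleGraph V) [DecidableRel G.Adj]
    (q ε : ℝ) (B : Finset V) (u : V) : Finset V :=
  {v | G.Adj u v ∧ (#{w ∈ {w ∈ B | G.Adj u w} | G.Adj v w} : ℝ) < (1 - ε) * q ^ 2 * #B}

variable {G : SimpleGraph V} [DecidableRel G.Adj]

lemma degIn_coe (u : V) (X : Finset V) : degIn G u ↑X = #{v ∈ X | G.Adj u v} := by
  rw [degIn, ← Set.ncard_coe_finset]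
  congr 1
  ext v
  simp [and_comm]

lemma ncard_neighborSet_inter_neighborSet_inter_coe (u v : V) (X : Finset V) :
    (G.neighborSet u ∩ G.neighborSet v ∩ ↑X).ncard = #{w ∈ {w ∈ X | G.Adj u w} | G.Adj v w} := by
  rw [← Set.ncard_coe_finset]
  congr 1
  ext w
  simp only [Set.mem_inter_iff, SimpleGraph.mem_neighborSet, coe_filter, Set.mem_ofPred_eq,
    mem_coe, mem_filter]
  tauto

variable [Fintype V] {q ε M : ℝ}

lemma two_mul_ncard_edgeSet_eq_card_interedges :
    2 * G.edgeSet.ncard = #(G.interedges univ univ) := by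
  rw [card_interedges_eq_sum, ← SimpleGraph.coe_edgeFinset, Set.ncard_coe_finset,
    ← G.sum_degrees_eq_twice_card_edges]
  exact sum_congr rfl fun u _ => by rw [← SimpleGraph.card_neighborFinset_eq_degree,
    SimpleGraph.neighborFinset_eq_filter]

lemma ncard_atypicalEdges_le_of_sparse (hq0 : 0 < q)
    (hsmall : q ^ 2 * Fintype.card V ≤ 500 * M / ε ^ 2)
    (hedge : UpperSparse G q 1 (Fintype.card V) (Fintype.card V)) (A B : Set V) :
    ((atypicalEdges G q ε A B).ncard : ℝ) ≤ 10 ^ 3 * M * ε⁻¹ ^ 2 * q⁻¹ * Fintype.card V := by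
  set n : ℝ := (Fintype.card V : ℝ)
  have hsub : ((atypicalEdges G q ε A B).ncard : ℝ) ≤ G.edgeSet.ncard := by
    exact_mod_cast Set.ncard_le_ncard (fun _ he => he.1 : atypicalEdges G q ε A B ⊆ G.edgeSet)
  have hedges := hedge univ univ (by simp [n]) (by simp [n])
  rw [card_univ, ← two_mul_ncard_edgeSet_eq_card_interedges] at hedges
  push_cast at hedges
  have hsmall' : q * (n * n) ≤ 500 * M * ε⁻¹ ^ 2 * q⁻¹ * n :=
    calc q * (n * n) = q ^ 2 * n * (n * q⁻¹) := by field_simp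
      _ ≤ 500 * M / ε ^ 2 * (n * q⁻¹) := by gcongr
      _ = 500 * M * ε⁻¹ ^ 2 * q⁻¹ * n := by ring
  nlinarith [show (0 : ℝ) ≤ q * (n * n) by positivity]

lemma degIn_bounds_of_notMem_degreeOutliers (hq : 0 ≤ q) (hε : 0 ≤ ε) {X : Finset V} {u : V}
    (hu : u ∉ degreeOutliers G q (ε / 2) X) :
    (1 - ε) * q * (↑X : Set V).ncard ≤ (degIn G u ↑X : ℝ) ∧
      (degIn G u ↑X : ℝ) ≤ (1 + ε) * q * (↑X : Set V).ncard := by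
  simp only [degreeOutliers, mem_filter, mem_univ, true_and, not_not] at hu
  rw [degIn_coe, Set.ncard_coe_finset]
  have : 0 ≤ ε * q * #X := by positivity
  constructor <;> nlinarith [hu.1, hu.2]

variable [DecidableEq V] {t : ℝ}

lemma card_degreeOutliers_lt (hq0 : 0 < q) (hε0 : 0 < ε) (hε1 : ε < 1 / 2) (hM : 0 < M)
    {X : Finset V} (hXt : t ≤ #X) (hX : 6 ≤ ε * #X)
    (hlow : LowerDense G q (ε / 3) (130 * M / (ε ^ 2 * q)) t)
    (hup : UpperSparse G q (ε / 2) (80 * M / (ε ^ 2 * q)) t) :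
    (#(degreeOutliers G q (ε / 2) X) : ℝ) < 210 * M / (ε ^ 2 * q) := by
  have hlow' := hlow.card_filter_lt hq0.le (by linarith) (by positivity) hXt
    (c := (1 - ε / 2) * q * #X) (by nlinarith)
  have hup' := hup.card_filter_lt (by positivity) hXt
  simp only [degreeOutliers, not_and_or, not_le, filter_or]
  calc _ ≤ (#{u | (#{v ∈ X | G.Adj u v} : ℝ) < (1 - ε / 2) * q * #X} : ℝ)
        + #{u | (1 + ε / 2) * q * #X < (#{v ∈ X | G.Adj u v} : ℝ)} := by
        exact_mod_cast card_union_le _ _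
    _ < 130 * M / (ε ^ 2 * q) + 80 * M / (ε ^ 2 * q) := add_lt_add hlow' hup'
    _ = 210 * M / (ε ^ 2 * q) := by ring

lemma card_lowCodegreeNeighbors_lt (hq0 : 0 < q) (hε0 : 0 < ε) (hε1 : ε < 1 / 2) (hM : 0 < M)
    {n : ℝ} (hn : 16 / ε ≤ q * (n / M))
    (hcod : CodegreeDense G q (ε / 3) (550 * M / (ε ^ 2 * q)) (3 / 4 * q * n / M))
    {B : Finset V} (hB : n / M ≤ #B) {u : V} (hu : u ∉ degreeOutliers G q (ε / 2) B) :
    (#(lowCodegreeNeighbors G q ε B u) : ℝ) < 550 * M / (ε ^ 2 * q) := by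
  simp only [degreeOutliers, mem_filter, mem_univ, true_and, not_not] at hu
  set d : ℝ := (#{w ∈ B | G.Adj u w} : ℝ)
  have hqB : 0 ≤ q * #B := by positivity
  have hdt : 3 / 4 * q * n / M ≤ d := by
    rw [mul_div_assoc]
    nlinarith [mul_le_mul_of_nonneg_left hB hq0.le,
      mul_nonneg (by linarith : (0 : ℝ) ≤ 1 / 4 - ε / 2) hqB]
  have hεd : 8 ≤ ε * d := by
    rw [mul_div_assoc] at hdt
    nlinarith [mul_le_mul_of_nonneg_left hdt hε0.le, (div_le_iff₀ hε0).1 hn]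
  refine hcod.card_filter_lt hq0.le (by linarith) (by positivity) hdt ?_
  have key : (1 - ε) * (q * #B) ≤ (1 - ε / 3) * (d - 1) :=
    calc (1 - ε) * (q * #B) ≤ (1 - ε / 3) * (1 - ε / 8) * ((1 - ε / 2) * q * #B) := by
          nlinarith [mul_nonneg (mul_nonneg hε0.le hε0.le) hqB]
      _ ≤ (1 - ε / 3) * (1 - ε / 8) * d := mul_le_mul_of_nonneg_left hu.1 (by nlinarith)
      _ ≤ (1 - ε / 3) * (d - 1) := by nlinarith
  nlinarith [mul_le_mul_of_nonneg_left key hq0.le]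

lemma exists_eq_mk_of_mem_atypicalEdges (hq : 0 ≤ q) (hε : 0 ≤ ε) {A B : Finset V}
    {e : Sym2 V} (he : e ∈ atypicalEdges G q ε ↑A ↑B) :
    ∃ u v, e = s(u, v) ∧ (u ∈ degreeOutliers G q (ε / 2) A ∪ degreeOutliers G q (ε / 2) B ∨
      v ∈ lowCodegreeNeighbors G q ε B u) := by
  obtain ⟨he, u, v, rfl, hnot⟩ := he
  by_cases hu : u ∈ degreeOutliers G q (ε / 2) A ∪ degreeOutliers G q (ε / 2) B
  · exact ⟨u, v, rfl, .inl hu⟩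
  by_cases hv : v ∈ degreeOutliers G q (ε / 2) A ∪ degreeOutliers G q (ε / 2) B
  · exact ⟨v, u, Sym2.eq_swap, .inl hv⟩
  refine ⟨u, v, rfl, .inr (mem_filter.2 ⟨mem_univ v, he, ?_⟩)⟩
  by_contra! hcodeg
  obtain ⟨huA, huB⟩ := notMem_union.1 hu
  obtain ⟨hvA, hvB⟩ := notMem_union.1 hv
  exact hnot ⟨degIn_bounds_of_notMem_degreeOutliers hq hε huA,
    degIn_bounds_of_notMem_degreeOutliers hq hε hvA,
    degIn_bounds_of_notMem_degreeOutliers hq hε huB,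
    degIn_bounds_of_notMem_degreeOutliers hq hε hvB,
    by rwa [ncard_neighborSet_inter_neighborSet_inter_coe, Set.ncard_coe_finset]⟩

lemma ncard_atypicalEdges_le_of_dense (hq0 : 0 < q) (hq1 : q < 1) (hε0 : 0 < ε)
    (hε1 : ε < 1 / 2) (hM : 1 ≤ M) (hn : 16 * M / ε ≤ q * Fintype.card V)
    (hlow : LowerDense G q (ε / 3) (130 * M / (ε ^ 2 * q)) (Fintype.card V / M))
    (hup : UpperSparse G q (ε / 2) (80 * M / (ε ^ 2 * q)) (Fintype.card V / M))
    (hcod : CodegreeDense G q (ε / 3) (550 * M / (ε ^ 2 * q)) (3 / 4 * q * Fintype.card V / M))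
    {A B : Finset V} (hA : Fintype.card V / M ≤ #A) (hB : Fintype.card V / M ≤ #B) :
    ((atypicalEdges G q ε ↑A ↑B).ncard : ℝ) ≤ 10 ^ 3 * M * ε⁻¹ ^ 2 * q⁻¹ * Fintype.card V := by
  set n : ℝ := (Fintype.card V : ℝ)
  have hn' : 16 / ε ≤ q * (n / M) := by
    rw [mul_div_assoc', div_le_div_iff₀ hε0 (by positivity)]
    rw [div_le_iff₀ hε0] at hn
    linarith
  have hlarge : ∀ {X : Finset V}, n / M ≤ #X → 6 ≤ ε * #X := fun hX => by
    rw [div_le_iff₀ hε0] at hn'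
    nlinarith [mul_le_mul_of_nonneg_left hX hε0.le]
  set U := degreeOutliers G q (ε / 2) A ∪ degreeOutliers G q (ε / 2) B
  have hU : (#U : ℝ) ≤ 420 * M / (ε ^ 2 * q) := by
    have hA' := card_degreeOutliers_lt hq0 hε0 hε1 (by linarith) hA (hlarge hA) hlow hup
    have hB' := card_degreeOutliers_lt hq0 hε0 hε1 (by linarith) hB (hlarge hB) hlow hup
    calc (#U : ℝ) ≤ #(degreeOutliers G q (ε / 2) A) + #(degreeOutliers G q (ε / 2) B) := by
          exact_mod_cast card_union_le _ _
      _ ≤ 420 * M / (ε ^ 2 * q) := by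
          linarith [show 420 * M / (ε ^ 2 * q) = 2 * (210 * M / (ε ^ 2 * q)) by ring]
  calc ((atypicalEdges G q ε ↑A ↑B).ncard : ℝ) ≤ #U * n + n * (550 * M / (ε ^ 2 * q)) :=
        ncard_le_of_forall_eq_mk U (lowCodegreeNeighbors G q ε B) (by positivity)
          (fun u hu => (card_lowCodegreeNeighbors_lt hq0 hε0 hε1 (by linarith) hn' hcod hB
            (notMem_union.1 hu).2).le)
          fun e he => exists_eq_mk_of_mem_atypicalEdges hq0.le hε0.le he
    _ ≤ 420 * M / (ε ^ 2 * q) * n + n * (550 * M / (ε ^ 2 * q)) := by gcongr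
    _ ≤ 10 ^ 3 * M * ε⁻¹ ^ 2 * q⁻¹ * n := by
      rw [div_eq_mul_inv, div_eq_mul_inv, mul_inv, ← inv_pow]
      nlinarith [show 0 ≤ M * ε⁻¹ ^ 2 * q⁻¹ * n by positivity]

end Typical

section PairMultiplicity

variable {V : Type*} [DecidableEq V]

def pairMultiplicity (P : Finset (V × V)) (e : Sym2 V) : ℕ := #{x ∈ P | s(x.1, x.2) = e}

lemma pairMultiplicity_le_two (P : Finset (V × V)) (e : Sym2 V) : pairMultiplicity P e ≤ 2 := by
  induction e using Sym2.ind with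
  | _ a b =>
    calc pairMultiplicity P s(a, b) ≤ #({(a, b), (b, a)} : Finset (V × V)) := by
          refine card_le_card fun x hx => ?_
          rcases Sym2.eq_iff.1 (mem_filter.1 hx).2 with ⟨h1, h2⟩ | ⟨h1, h2⟩ <;>
            simp [Prod.ext_iff, h1, h2]
      _ ≤ 2 := card_le_two

lemma sum_pairMultiplicity [Fintype V] (P : Finset (V × V)) :
    ∑ e, (pairMultiplicity P e : ℝ) = #P := by
  rw [card_eq_sum_card_fiberwise (f := fun x : V × V => s(x.1, x.2)) (t := univ)
    fun _ _ => mem_coe.2 (mem_univ _)]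
  push_cast
  rfl

lemma card_filter_eq_weightedCount [Fintype V] (P : Finset (V × V)) (ω : Sym2 V → Bool) :
    (#{x ∈ P | ω s(x.1, x.2) = true} : ℝ) = weightedCount (fun e => pairMultiplicity P e) ω := by
  rw [card_eq_sum_card_fiberwise (f := fun x : V × V => s(x.1, x.2)) (t := univ)
    fun _ _ => mem_coe.2 (mem_univ _), weightedCount]
  push_cast
  refine sum_congr rfl fun e _ => ?_
  rw [filter_filter, pairMultiplicity]
  split_ifs with he
  · congr 2
    ext x
    simp only [mem_filter, and_congr_right_iff, and_iff_right_iff_imp]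
    exact fun _ hx => hx ▸ he
  · rw [Nat.cast_eq_zero, card_eq_zero, filter_eq_empty_iff]
    exact fun x _ ⟨hx, hxe⟩ => he (hxe ▸ hx)

end PairMultiplicity

section Gnp

variable {n : ℕ} {q δ s t : ℝ}

instance (ω : Sym2 (Fin n) → Bool) : DecidableRel (graphOfFlip ω).Adj :=
  fun u v => inferInstanceAs (Decidable (u ≠ v ∧ ω s(u, v) = true))

instance : IsProbabilityMeasure (gnp n q) := by
  unfold gnp
  infer_instance

set_option linter.deprecated false in
lemma bernoulli_toMeasure_real_true (hq0 : 0 ≤ q) (hq1 : q ≤ 1) :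
    (PMF.bernoulli (min q.toNNReal 1) (min_le_right _ _)).toMeasure.real {true} = q := by
  rw [measureReal_def, PMF.toMeasure_apply_singleton _ _ (measurableSet_singleton _),
    PMF.bernoulli_apply, cond_true, min_eq_left (Real.toNNReal_le_one.2 hq1)]
  simp [hq0]

lemma interedges_graphOfFlip (ω : Sym2 (Fin n) → Bool) (S T : Finset (Fin n)) :
    (graphOfFlip ω).interedges S T
      = {x ∈ (⊤ : SimpleGraph (Fin n)).interedges S T | ω s(x.1, x.2) = true} := by
  ext x
  simp only [mem_filter, SimpleGraph.mem_interedges_iff, SimpleGraph.top_adj]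
  exact ⟨fun ⟨hS, hT, hne, hω⟩ => ⟨⟨hS, hT, hne⟩, hω⟩, fun ⟨⟨hS, hT, hne⟩, hω⟩ => ⟨hS, hT, hne, hω⟩⟩

lemma interedges_graphOfFlip_congr {ω ω' : Sym2 (Fin n) → Bool} {S T : Finset (Fin n)}
    (h : ∀ x ∈ S, ∀ y ∈ T, ω s(x, y) = ω' s(x, y)) :
    (graphOfFlip ω).interedges S T = (graphOfFlip ω').interedges S T := by
  simp only [interedges_graphOfFlip]
  refine filter_congr fun x hx => ?_
  rw [SimpleGraph.mem_interedges_iff] at hx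
  rw [h _ hx.1 _ hx.2.1]

/- An edge with both ends in `S ∩ T` is counted twice in `interedges S T`, hence the Chernoff
bounds for weights in `[0, 2]`. -/
lemma gnp_real_card_interedges_le_le (hq0 : 0 ≤ q) (hq1 : q ≤ 1) (hδ0 : 0 ≤ δ) (hδ1 : δ ≤ 1)
    (S T : Finset (Fin n)) :
    (gnp n q).real {ω | (#((graphOfFlip ω).interedges S T) : ℝ)
        ≤ (1 - δ) * q * #((⊤ : SimpleGraph (Fin n)).interedges S T)}
      ≤ Real.exp (-(δ ^ 2 * q * #((⊤ : SimpleGraph (Fin n)).interedges S T) / 6)) := by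
  simp only [interedges_graphOfFlip, card_filter_eq_weightedCount,
    ← sum_pairMultiplicity ((⊤ : SimpleGraph (Fin n)).interedges S T)]
  exact measureReal_weightedCount_le_le (fun _ => bernoulli_toMeasure_real_true hq0 hq1) hq0 hq1
    (fun e => ⟨Nat.cast_nonneg _, by exact_mod_cast pairMultiplicity_le_two _ e⟩) hδ0 hδ1

lemma gnp_real_le_card_interedges_le (hq0 : 0 ≤ q) (hq1 : q ≤ 1) (hδ0 : 0 ≤ δ) (hδ1 : δ ≤ 1)
    (S T : Finset (Fin n)) :
    (gnp n q).real {ω | (1 + δ) * q * #((⊤ : SimpleGraph (Fin n)).interedges S T)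
        ≤ (#((graphOfFlip ω).interedges S T) : ℝ)}
      ≤ Real.exp (-(δ ^ 2 * q * #((⊤ : SimpleGraph (Fin n)).interedges S T) / 6)) := by
  simp only [interedges_graphOfFlip, card_filter_eq_weightedCount,
    ← sum_pairMultiplicity ((⊤ : SimpleGraph (Fin n)).interedges S T)]
  exact measureReal_le_weightedCount_le (fun _ => bernoulli_toMeasure_real_true hq0 hq1) hq0 hq1
    (fun e => ⟨Nat.cast_nonneg _, by exact_mod_cast pairMultiplicity_le_two _ e⟩) hδ0 hδ1

lemma gnp_real_not_lowerDense_le (hq0 : 0 ≤ q) (hq1 : q ≤ 1) (hδ0 : 0 ≤ δ) (hδ1 : δ ≤ 1)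
    (ht8 : 8 ≤ t) (hst : 2 * n ≤ 7 / 48 * δ ^ 2 * q * s * t) :
    (gnp n q).real {ω | ¬ LowerDense (graphOfFlip ω) q δ s t} ≤ Real.exp (-(n / 2)) := by
  have h := measureReal_exists_pair_le (μ := gnp n q) (fun S T => s ≤ #S ∧ t ≤ #T)
    (fun S T => {ω | (#((graphOfFlip ω).interedges S T) : ℝ)
        ≤ (1 - δ) * q * #((⊤ : SimpleGraph (Fin n)).interedges S T)}) fun S T ⟨hS, hT⟩ =>
      (gnp_real_card_interedges_le_le hq0 hq1 hδ0 hδ1 S T).trans <| Real.exp_le_exp.2 <| by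
        simp only [Fintype.card_fin]
        linarith [mul_le_card_top_interedges (δ := δ) hq0 ht8 hS hT]
  simp only [Fintype.card_fin] at h
  refine (measureReal_mono fun ω hω => ?_).trans h
  simp only [LowerDense, Set.mem_ofPred_eq, not_forall, not_le] at hω ⊢
  obtain ⟨S, T, hS, hT, hlt⟩ := hω
  exact ⟨S, T, ⟨hS, hT⟩, hlt.le⟩

lemma gnp_real_not_upperSparse_le (hq0 : 0 ≤ q) (hq1 : q ≤ 1) (hδ0 : 0 ≤ δ) (hδ1 : δ ≤ 1)
    (ht8 : 8 ≤ t) (hst : 2 * n ≤ 7 / 48 * δ ^ 2 * q * s * t) :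
    (gnp n q).real {ω | ¬ UpperSparse (graphOfFlip ω) q δ s t} ≤ Real.exp (-(n / 2)) := by
  have h := measureReal_exists_pair_le (μ := gnp n q) (fun S T => s ≤ #S ∧ t ≤ #T)
    (fun S T => {ω | (1 + δ) * q * #((⊤ : SimpleGraph (Fin n)).interedges S T)
        ≤ (#((graphOfFlip ω).interedges S T) : ℝ)}) fun S T ⟨hS, hT⟩ =>
      (gnp_real_le_card_interedges_le hq0 hq1 hδ0 hδ1 S T).trans <| Real.exp_le_exp.2 <| by
        simp only [Fintype.card_fin]
        linarith [mul_le_card_top_interedges (δ := δ) hq0 ht8 hS hT]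
  simp only [Fintype.card_fin] at h
  refine (measureReal_mono fun ω hω => ?_).trans h
  simp only [UpperSparse, Set.mem_ofPred_eq, not_forall, not_le] at hω ⊢
  obtain ⟨S, T, hS, hT, hlt⟩ := hω
  refine ⟨S, T, ⟨hS, hT⟩, le_trans ?_ hlt.le⟩
  have : (#((⊤ : SimpleGraph (Fin n)).interedges S T) : ℝ) ≤ #S * #T := by
    exact_mod_cast SimpleGraph.card_interedges_le_mul _ S T
  gcongr

lemma gnp_real_forall_adj_inter_le (hq0 : 0 ≤ q) (hq1 : q ≤ 1) (hδ0 : 0 ≤ δ) (hδ1 : δ ≤ 1)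
    {u : Fin n} {S T : Finset (Fin n)} (huS : u ∉ S) (huT : u ∉ T) :
    (gnp n q).real ({ω | ∀ v ∈ S ∪ T, (graphOfFlip ω).Adj u v} ∩
        {ω | (#((graphOfFlip ω).interedges S T) : ℝ)
          ≤ (1 - δ) * q * #((⊤ : SimpleGraph (Fin n)).interedges S T)})
      ≤ q ^ #(S ∪ T) *
        Real.exp (-(δ ^ 2 * q * #((⊤ : SimpleGraph (Fin n)).interedges S T) / 6)) := by
  set J := (S ∪ T).image fun v => s(u, v)
  have hJ : #J = #(S ∪ T) := card_image_of_injective _ fun v w h => Sym2.congr_right.1 h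
  have hoff : ∀ x ∈ S, ∀ y ∈ T, s(x, y) ∉ J := by
    intro x hx y hy hxy
    obtain ⟨v, -, hv⟩ := mem_image.1 hxy
    rcases Sym2.eq_iff.1 hv with ⟨hux, -⟩ | ⟨huy, -⟩
    exacts [huS (hux ▸ hx), huT (huy ▸ hy)]
  calc _ ≤ (gnp n q).real ({ω | ∀ e ∈ J, ω e = true} ∩
        {ω | (#((graphOfFlip ω).interedges S T) : ℝ)
          ≤ (1 - δ) * q * #((⊤ : SimpleGraph (Fin n)).interedges S T)}) := by
        refine measureReal_mono (Set.inter_subset_inter_left _ fun ω hω e he => ?_)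
        obtain ⟨v, hv, rfl⟩ := mem_image.1 he
        exact (hω v hv).2
    _ = q ^ #J * (gnp n q).real {ω | (#((graphOfFlip ω).interedges S T) : ℝ)
          ≤ (1 - δ) * q * #((⊤ : SimpleGraph (Fin n)).interedges S T)} :=
        measureReal_pi_forall_true_inter (fun _ => bernoulli_toMeasure_real_true hq0 hq1) J
          fun ω ω' h hω => by
            rwa [Set.mem_ofPred_eq, ← interedges_graphOfFlip_congr fun x hx y hy =>
              h _ (hoff x hx y hy)]
    _ ≤ _ := by
        rw [hJ]
        gcongr
        exact gnp_real_card_interedges_le_le hq0 hq1 hδ0 hδ1 S T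

/- Of the Chernoff exponent `c |S| |T|`, `c = 7/48 δ² q`, the part `c s t / 2` survives the
union bound and `3/2` per vertex of `S ∪ T` pays for the sum over `S` and `T`. -/
lemma gnp_real_forall_adj_inter_le_exp (hq0 : 0 ≤ q) (hq1 : q ≤ 1) (hδ0 : 0 ≤ δ) (hδ1 : δ ≤ 1)
    (ht8 : 8 ≤ t) (hs : 6 ≤ 7 / 48 * δ ^ 2 * q * s) (ht : 6 ≤ 7 / 48 * δ ^ 2 * q * t)
    {u : Fin n} {S T : Finset (Fin n)} (huS : u ∉ S) (huT : u ∉ T) (hS : s ≤ #S) (hT : t ≤ #T) :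
    (gnp n q).real ({ω | ∀ v ∈ S ∪ T, (graphOfFlip ω).Adj u v} ∩
        {ω | (#((graphOfFlip ω).interedges S T) : ℝ)
          ≤ (1 - δ) * q * #((⊤ : SimpleGraph (Fin n)).interedges S T)})
      ≤ Real.exp (-(7 / 48 * δ ^ 2 * q * s * t / 2)) * (q * Real.exp (-(3 / 2))) ^ #(S ∪ T) := by
  set c := 7 / 48 * δ ^ 2 * q
  have hc0 : 0 ≤ c := by positivity
  have htop : c * #S * #T ≤ δ ^ 2 * q * #((⊤ : SimpleGraph (Fin n)).interedges S T) / 6 :=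
    mul_le_card_top_interedges hq0 (ht8.trans hT) le_rfl le_rfl
  have hST : (#(S ∪ T) : ℝ) ≤ #S + #T := by exact_mod_cast card_union_le S T
  have hprod := mul_le_mul hS hT (by linarith) (Nat.cast_nonneg #S)
  have hexp : c * s * t / 2 + #(S ∪ T) * (3 / 2) ≤ c * #S * #T := by
    nlinarith [mul_nonneg hc0 (sub_nonneg.2 hprod),
      mul_nonneg (mul_nonneg hc0 (Nat.cast_nonneg (α := ℝ) #S)) (sub_nonneg.2 hT),
      mul_nonneg (mul_nonneg hc0 (Nat.cast_nonneg (α := ℝ) #T)) (sub_nonneg.2 hS),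
      mul_le_mul_of_nonneg_right ht (Nat.cast_nonneg (α := ℝ) #S),
      mul_le_mul_of_nonneg_right hs (Nat.cast_nonneg (α := ℝ) #T)]
  calc _ ≤ q ^ #(S ∪ T) *
        Real.exp (-(δ ^ 2 * q * #((⊤ : SimpleGraph (Fin n)).interedges S T) / 6)) :=
        gnp_real_forall_adj_inter_le hq0 hq1 hδ0 hδ1 huS huT
    _ ≤ q ^ #(S ∪ T) * Real.exp (-(c * s * t / 2) + #(S ∪ T) * (-(3 / 2))) := by
        gcongr
        linarith
    _ = _ := by rw [mul_pow, ← Real.exp_nat_mul, Real.exp_add]; ring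

lemma gnp_real_not_codegreeDense_le (hq0 : 0 ≤ q) (hq1 : q ≤ 1) (hδ0 : 0 ≤ δ) (hδ1 : δ ≤ 1)
    (ht8 : 8 ≤ t) (hs : 6 ≤ 7 / 48 * δ ^ 2 * q * s) (ht : 6 ≤ 7 / 48 * δ ^ 2 * q * t)
    (hst : 3 * q * n ≤ 7 / 48 * δ ^ 2 * q * s * t) :
    (gnp n q).real {ω | ¬ CodegreeDense (graphOfFlip ω) q δ s t}
      ≤ n * Real.exp (-(q * n / 2)) := by
  set x := q * Real.exp (-(3 / 2))
  set F : Fin n × Finset (Fin n) × Finset (Fin n) → Set (Sym2 (Fin n) → Bool) := fun y =>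
    if y.1 ∉ y.2.1 ∧ y.1 ∉ y.2.2 ∧ s ≤ #y.2.1 ∧ t ≤ #y.2.2 then
      {ω | ∀ v ∈ y.2.1 ∪ y.2.2, (graphOfFlip ω).Adj y.1 v} ∩
        {ω | (#((graphOfFlip ω).interedges y.2.1 y.2.2) : ℝ)
          ≤ (1 - δ) * q * #((⊤ : SimpleGraph (Fin n)).interedges y.2.1 y.2.2)}
    else ∅
  have hsub : {ω | ¬ CodegreeDense (graphOfFlip ω) q δ s t} ⊆ ⋃ y, F y := by
    intro ω hω
    simp only [CodegreeDense, Set.mem_ofPred_eq, not_forall, not_le] at hω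
    obtain ⟨u, S, T, huS, huT, hS, hT, hadj, hlt⟩ := hω
    refine Set.mem_iUnion.2 ⟨(u, S, T), ?_⟩
    simp only [F, if_pos (show _ ∧ _ ∧ _ ∧ _ from ⟨huS, huT, hS, hT⟩)]
    exact ⟨hadj, hlt.le⟩
  have hF : ∀ y, (gnp n q).real (F y)
      ≤ Real.exp (-(7 / 48 * δ ^ 2 * q * s * t / 2)) * x ^ #(y.2.1 ∪ y.2.2) := by
    rintro ⟨u, S, T⟩
    by_cases hadm : u ∉ S ∧ u ∉ T ∧ s ≤ #S ∧ t ≤ #T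
    · simp only [F, if_pos hadm]
      exact gnp_real_forall_adj_inter_le_exp hq0 hq1 hδ0 hδ1 ht8 hs ht hadm.1 hadm.2.1
        hadm.2.2.1 hadm.2.2.2
    · simp only [F, if_neg hadm, measureReal_empty]
      positivity
  have hx : 3 * x ≤ 3 / 4 * q := by
    have : Real.exp (-(3 / 2)) ≤ 1 / 4 := by
      rw [Real.exp_neg, inv_le_comm₀ (Real.exp_pos _) (by norm_num)]
      linarith [four_le_exp_three_halves]
    nlinarith
  have hpow : (1 + 3 * x) ^ n ≤ Real.exp (3 * x * n) :=
    calc (1 + 3 * x) ^ n ≤ Real.exp (3 * x) ^ n :=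
          pow_le_pow_left₀ (by positivity) (by linarith [Real.add_one_le_exp (3 * x)]) n
      _ = Real.exp (3 * x * n) := by rw [← Real.exp_nat_mul]; ring_nf
  calc _ ≤ ∑ y, (gnp n q).real (F y) :=
        (measureReal_mono hsub (measure_ne_top _ _)).trans (measureReal_iUnion_fintype_le F)
    _ ≤ ∑ y : Fin n × Finset (Fin n) × Finset (Fin n),
          Real.exp (-(7 / 48 * δ ^ 2 * q * s * t / 2)) * x ^ #(y.2.1 ∪ y.2.2) :=
        sum_le_sum fun y _ => hF y
    _ = n * (Real.exp (-(7 / 48 * δ ^ 2 * q * s * t / 2)) * (1 + 3 * x) ^ n) := by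
        simp only [Fintype.sum_prod_type, ← mul_sum, sum_sum_pow_card_union, Fintype.card_fin,
          sum_const, card_univ, nsmul_eq_mul]
        ring
    _ ≤ n * (Real.exp (-(7 / 48 * δ ^ 2 * q * s * t / 2)) * Real.exp (3 * x * n)) := by gcongr
    _ ≤ n * Real.exp (-(q * n / 2)) := by
        rw [← Real.exp_add]
        gcongr
        nlinarith

end Gnp

section Assembly

variable {n : ℕ} {q ε M : ℝ}

def typicalGraphs (n : ℕ) (q ε M : ℝ) : Set (Sym2 (Fin n) → Bool) :=
  {ω | ∀ A B : Set (Fin n), (n : ℝ) / M ≤ (A.ncard : ℝ) → (n : ℝ) / M ≤ (B.ncard : ℝ) →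
    ((atypicalEdges (graphOfFlip ω) q ε A B).ncard : ℝ) ≤ 10 ^ 3 * M * ε⁻¹ ^ 2 * q⁻¹ * n}

lemma mem_typicalGraphs_of_upperSparse (hq0 : 0 < q) (hsmall : q ^ 2 * n ≤ 500 * M / ε ^ 2)
    {ω : Sym2 (Fin n) → Bool} (h : UpperSparse (graphOfFlip ω) q 1 n n) :
    ω ∈ typicalGraphs n q ε M := fun A B _ _ => by
  simpa using ncard_atypicalEdges_le_of_sparse (G := graphOfFlip ω) hq0 (by simpa using hsmall)
    (by simpa using h) A B

lemma mem_typicalGraphs_of_dense (hq0 : 0 < q) (hq1 : q < 1) (hε0 : 0 < ε) (hε1 : ε < 1 / 2)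
    (hM : 1 ≤ M) (hn : 16 * M / ε ≤ q * n) {ω : Sym2 (Fin n) → Bool}
    (hlow : LowerDense (graphOfFlip ω) q (ε / 3) (130 * M / (ε ^ 2 * q)) (n / M))
    (hup : UpperSparse (graphOfFlip ω) q (ε / 2) (80 * M / (ε ^ 2 * q)) (n / M))
    (hcod : CodegreeDense (graphOfFlip ω) q (ε / 3) (550 * M / (ε ^ 2 * q)) (3 / 4 * q * n / M)) :
    ω ∈ typicalGraphs n q ε M := by
  intro A B hA hB
  obtain ⟨A, rfl⟩ := A.toFinite.exists_finset_coe
  obtain ⟨B, rfl⟩ := B.toFinite.exists_finset_coe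
  rw [Set.ncard_coe_finset] at hA hB
  simpa using ncard_atypicalEdges_le_of_dense (G := graphOfFlip ω) hq0 hq1 hε0 hε1 hM
    (by simpa using hn) (by simpa using hlow) (by simpa using hup) (by simpa using hcod)
    (by simpa using hA) (by simpa using hB)

lemma gnp_real_compl_typicalGraphs_le_of_sparse (hq0 : 0 < q) (hq1 : q < 1)
    (hsmall : q ^ 2 * n ≤ 500 * M / ε ^ 2) (hn8 : (8 : ℝ) ≤ n) (hqn : 14 ≤ q * n) :
    (gnp n q).real (typicalGraphs n q ε M)ᶜ ≤ Real.exp (-(n / 2)) := by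
  refine (measureReal_mono fun ω hω => ?_).trans
    (gnp_real_not_upperSparse_le (s := n) (t := n) hq0.le hq1.le zero_le_one le_rfl
      hn8 (by nlinarith [mul_le_mul_of_nonneg_right hqn (Nat.cast_nonneg n)]))
  exact fun h => hω (mem_typicalGraphs_of_upperSparse hq0 hsmall h)

lemma gnp_real_compl_typicalGraphs_le_of_dense (hq0 : 0 < q) (hq1 : q < 1) (hε0 : 0 < ε)
    (hε1 : ε < 1 / 2) (hM : 1 ≤ M) (hn : 16 * M / ε ≤ q * n)
    (hdense : 500 * M / ε ^ 2 < q ^ 2 * n) :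
    (gnp n q).real (typicalGraphs n q ε M)ᶜ
      ≤ 2 * Real.exp (-(n / 2)) + n * Real.exp (-(q * n / 2)) := by
  have hnM : 16 / ε ≤ q * (n / M) := by
    rw [mul_div_assoc', div_le_div_iff₀ hε0 (by positivity)]
    rw [div_le_iff₀ hε0] at hn
    linarith
  have h32 : 32 ≤ 16 / ε := (le_div_iff₀ hε0).2 (by linarith)
  have hn8 : 8 ≤ (n : ℝ) / M := by
    linarith [hnM.trans (mul_le_of_le_one_left (by positivity) hq1.le)]
  set Elow := {ω | ¬ LowerDense (graphOfFlip ω) q (ε / 3) (130 * M / (ε ^ 2 * q)) (n / M)}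
  set Eup := {ω | ¬ UpperSparse (graphOfFlip ω) q (ε / 2) (80 * M / (ε ^ 2 * q)) (n / M)}
  set Ecod := {ω | ¬ CodegreeDense (graphOfFlip ω) q (ε / 3) (550 * M / (ε ^ 2 * q))
    (3 / 4 * q * n / M)}
  have hlow : (gnp n q).real Elow ≤ Real.exp (-(n / 2)) :=
    gnp_real_not_lowerDense_le hq0.le hq1.le (by positivity) (by linarith) hn8
      (by field_simp; nlinarith)
  have hup : (gnp n q).real Eup ≤ Real.exp (-(n / 2)) :=
    gnp_real_not_upperSparse_le hq0.le hq1.le (by positivity) (by linarith) hn8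
      (by field_simp; nlinarith)
  have hcod : (gnp n q).real Ecod ≤ n * Real.exp (-(q * n / 2)) := by
    rw [div_lt_iff₀ (by positivity)] at hdense
    exact gnp_real_not_codegreeDense_le hq0.le hq1.le (by positivity) (by linarith)
      (by rw [mul_div_assoc]; linarith) (by field_simp; nlinarith) (by field_simp; nlinarith)
      (by field_simp; nlinarith)
  calc _ ≤ (gnp n q).real (Elow ∪ Eup ∪ Ecod) := by
        refine measureReal_mono fun ω hω => ?_
        by_contra h
        simp only [Elow, Eup, Ecod, Set.mem_union, Set.mem_ofPred_eq, not_or, not_not] at h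
        exact hω (mem_typicalGraphs_of_dense hq0 hq1 hε0 hε1 hM hn h.1.1 h.1.2 h.2)
    _ ≤ _ := by
        linarith [measureReal_union_le (μ := gnp n q) (Elow ∪ Eup) Ecod,
          measureReal_union_le (μ := gnp n q) Elow Eup]

lemma one_le_log_natCast (hn : 3 ≤ n) : 1 ≤ Real.log n := by
  rw [Real.le_log_iff_exp_le (by positivity)]
  have : (3 : ℝ) ≤ n := by exact_mod_cast hn
  linarith [Real.exp_one_lt_d9]

lemma natCast_mul_exp_neg_le (hn : 0 < n) (hlog : 4 * Real.log n ≤ q * n) :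
    n * Real.exp (-(q * n / 2)) ≤ 1 / n := by
  have hn' : (0 : ℝ) < n := by exact_mod_cast hn
  calc (n : ℝ) * Real.exp (-(q * n / 2)) ≤ n * Real.exp (-(2 * Real.log n)) := by
        gcongr
        linarith
    _ = 1 / n := by
        rw [Real.exp_neg, ← Real.log_rpow hn', Real.exp_log (by positivity)]
        field_simp
        norm_num [Real.rpow_two]

lemma gnp_real_typicalGraphs_ge (hq0 : 0 < q) (hq1 : q < 1) (hε0 : 0 < ε) (hε1 : ε < 1 / 2)
    (hM : 1 ≤ M) (hn3 : 3 ≤ n) (hn : 16 * M / ε ≤ q * n) (hlog : 100 * Real.log n ≤ q * n) :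
    1 - (2 * Real.exp (-(n / 2)) + 1 / n) ≤ (gnp n q).real (typicalGraphs n q ε M) := by
  have hlog1 := one_le_log_natCast hn3
  have hcompl := probReal_compl_eq_one_sub (μ := gnp n q)
    (.of_discrete : MeasurableSet (typicalGraphs n q ε M))
  have hexp : 0 ≤ Real.exp (-(n / 2)) := (Real.exp_pos _).le
  have hinv : (0 : ℝ) ≤ 1 / n := by positivity
  rcases le_or_gt (q ^ 2 * n) (500 * M / ε ^ 2) with hsmall | hdense
  · have hn8 : (8 : ℝ) ≤ n := by nlinarith
    linarith [gnp_real_compl_typicalGraphs_le_of_sparse hq0 hq1 hsmall hn8 (by nlinarith)]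
  · linarith [gnp_real_compl_typicalGraphs_le_of_dense hq0 hq1 hε0 hε1 hM hn hdense,
      natCast_mul_exp_neg_le (n := n) (q := q) (by omega) (by linarith)]

end Assembly

end GnpTypical

/-- **Lemma 4.2.** For any two large sets `A, B`, all but `O(p⁻¹ n)` edges `uv`
of `G(n,p)` have typical degrees into `A` and `B` and a typical common
neighbourhood in `B`. -/
theorem gnp_typical_edges (ε : ℝ) (hε0 : 0 < ε) (hε1 : ε < 1 / 2) (M : ℕ) (hM : 0 < M)
    (p : ℕ → ℝ) (hp : ∀ n, 0 < p n ∧ p n < 1)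
    (hgrow : Filter.Tendsto (fun n => p n * n / Real.log n) Filter.atTop Filter.atTop) :
    Filter.Tendsto (fun n => gnp n (p n)
      {ω |
        let G := graphOfFlip ω
        ∀ A B : Set (Fin n), (n : ℝ) / M ≤ (A.ncard : ℝ) → (n : ℝ) / M ≤ (B.ncard : ℝ) →
          ((Set.ncard {e : Sym2 (Fin n) | e ∈ G.edgeSet ∧ ∃ u v : Fin n, e = s(u, v) ∧
            ¬ (((1 - ε) * p n * A.ncard ≤ (degIn G u A : ℝ) ∧
                  (degIn G u A : ℝ) ≤ (1 + ε) * p n * A.ncard) ∧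
                ((1 - ε) * p n * A.ncard ≤ (degIn G v A : ℝ) ∧
                  (degIn G v A : ℝ) ≤ (1 + ε) * p n * A.ncard) ∧
                ((1 - ε) * p n * B.ncard ≤ (degIn G u B : ℝ) ∧
                  (degIn G u B : ℝ) ≤ (1 + ε) * p n * B.ncard) ∧
                ((1 - ε) * p n * B.ncard ≤ (degIn G v B : ℝ) ∧
                  (degIn G v B : ℝ) ≤ (1 + ε) * p n * B.ncard) ∧
                (1 - ε) * (p n) ^ 2 * B.ncard
                  ≤ ((G.neighborSet u ∩ G.neighborSet v ∩ B).ncard : ℝ))}) : ℝ)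
            ≤ 10 ^ 3 * M * (ε⁻¹) ^ 2 * (p n)⁻¹ * n})
      Filter.atTop (nhds 1) := by
  have hM1 : (1 : ℝ) ≤ M := by exact_mod_cast hM
  have hbound : ∀ᶠ n : ℕ in atTop, 1 - (2 * Real.exp (-(n / 2)) + 1 / n)
      ≤ (gnp n (p n)).real (GnpTypical.typicalGraphs n (p n) ε M) := by
    filter_upwards [hgrow.eventually_ge_atTop (16 * M / ε + 100), eventually_ge_atTop 3]
      with n hgrow_n hn3
    have hlog := GnpTypical.one_le_log_natCast hn3
    rw [le_div_iff₀ (by linarith)] at hgrow_n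
    have h16 : 0 ≤ 16 * (M : ℝ) / ε := by positivity
    have h16log : 16 * (M : ℝ) / ε ≤ 16 * M / ε * Real.log n := le_mul_of_one_le_right h16 hlog
    exact GnpTypical.gnp_real_typicalGraphs_ge (hp n).1 (hp n).2 hε0 hε1 hM1 hn3 (by linarith)
      (by linarith)
  have hlim : Tendsto (fun n : ℕ => 1 - (2 * Real.exp (-(n / 2)) + 1 / n)) atTop (nhds 1) := by
    have hexp : Tendsto (fun n : ℕ => Real.exp (-(n / 2))) atTop (nhds 0) :=
      Real.tendsto_exp_neg_atTop_nhds_zero.comp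
        (tendsto_natCast_atTop_atTop.atTop_div_const two_pos)
    simpa using tendsto_const_nhds.sub ((hexp.const_mul 2).add tendsto_one_div_atTop_nhds_zero_nat)
  have hreal := tendsto_of_tendsto_of_tendsto_of_le_of_le' hlim tendsto_const_nhds hbound
    (.of_forall fun _ => measureReal_le_one)
  rw [← ENNReal.ofReal_one]
  exact (ENNReal.tendsto_ofReal hreal).congr fun n => ofReal_measureReal (measure_ne_top _ _)
end

section
/- Let 0 < γ ≤ 1/10, let ε = γ²/10⁴ and η = γ²/10³ + 3ε, let p > 0, and let H be a graph on n vertices with minimum degree δ(H) ≥ (2/5 + γ)·p·n. Let X ∪ Y be a partition of V(H) such that e_H(X) ≤ η·p·n², e_H(Y) ≤ η·p·n², and e_H(X,Y) ≤ (1+ε)·p·|X|·|Y|. Then (2/5 + γ/2)·n ≤ |X| ≤ (3/5 − γ/2)·n and (2/5 + γ/2)·n ≤ |Y| ≤ (3/5 − γ/2)·n. -/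
open MeasureTheory Filter

/-! Summing degrees over one side `A` of the cut, with `B` the other side, counts each edge inside
`A` twice and each cut edge once: `δ(H)·|A| ≤ 2 e(A) + e(A,B) ≤ 2ηpn² + (1+ε)p|A||B|`.
If `|B| < (2/5 + γ/2)n`, then `|A| > (3/5 - γ/2)n`, and the inequality collapses to
`(γ/2 - ε(2/5 + γ/2))·|A|·n < 2ηn²`, which fails for `γ ≤ 1/10`. This gives the lower bounds;
the upper bounds follow from `|X| + |Y| = n`. -/

open Finset

namespace SimpleGraph

variable {V : Type*} (G : SimpleGraph V)

theorem edgeCount_comm (A B : Set V) : edgeCount G B A = edgeCount G A B := by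
  have h : {q : V × V | q.1 ∈ B ∧ q.2 ∈ A ∧ G.Adj q.1 q.2} =
      Prod.swap ⁻¹' {q : V × V | q.1 ∈ A ∧ q.2 ∈ B ∧ G.Adj q.1 q.2} := by
    ext ⟨a, b⟩
    simp only [Set.mem_ofPred_eq, Set.mem_preimage, Prod.swap_prod_mk, G.adj_comm b]
    tauto
  rw [edgeCount, edgeCount, h, Set.ncard_preimage_of_injective_subset_range Prod.swap_injective
    (by simp [Prod.swap_surjective.range_eq])]

theorem edgeCount_eq_sum_degIn [Fintype V] (A B : Set V) [DecidablePred (· ∈ A)] :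
    edgeCount G A B = ∑ v ∈ A.toFinset, degIn G v B := by
  classical
  calc edgeCount G A B = #{q ∈ A.toFinset ×ˢ univ | q.2 ∈ B ∧ G.Adj q.1 q.2} := by
        rw [edgeCount, ← Set.ncard_coe_finset]
        congr 1
        ext
        simp
    _ = ∑ v ∈ A.toFinset, #{w | w ∈ B ∧ G.Adj v w} := by
        simp only [card_filter, sum_product]
    _ = ∑ v ∈ A.toFinset, degIn G v B := sum_congr rfl fun v _ ↦ by
        rw [degIn, ← Set.ncard_coe_finset]
        congr 1
        ext
        simp [and_comm]

theorem edgeCount_self [Finite V] (A : Set V) : edgeCount G A A = 2 * edgesIn G A := by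
  classical
  have := Fintype.ofFinite V
  -- Handshake lemma for the subgraph of edges inside `A`; `K` is kept opaque so that its
  -- `edgeFinset` is built from the generic `Fintype` instance, not the `fromEdgeSet` one.
  obtain ⟨K, hK⟩ : ∃ K : SimpleGraph V, K.edgeSet = {e ∈ G.edgeSet | ∀ v ∈ e, v ∈ A} :=
    ⟨fromEdgeSet _, (edgeSet_fromEdgeSet _).trans <| sdiff_eq_left.2 <|
      Set.subset_compl_iff_disjoint_right.1 <| (Set.sep_subset _ _).trans
        G.edgeSet_subset_compl_diagSet⟩
  have hedges : edgesIn G A = #K.edgeFinset := by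
    rw [edgesIn, ← hK, ← coe_edgeFinset, Set.ncard_coe_finset]
  have hcount : edgeCount G A A = #{q : V × V | K.Adj q.1 q.2} := by
    rw [edgeCount, ← Set.ncard_coe_finset]
    congr 1
    ext ⟨a, b⟩
    simp only [coe_filter, mem_univ, true_and, Set.mem_ofPred_eq, ← mem_edgeSet, hK]
    simp [and_comm, and_assoc]
  rw [hcount, hedges, two_mul_card_edgeFinset]

theorem degIn_add_degIn_of_isCompl [Finite V] {A B : Set V} (h : IsCompl A B) (v : V) :
    degIn G v A + degIn G v B = (G.neighborSet v).ncard := by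
  have hAB : A ∪ B = Set.univ := h.sup_eq_top
  rw [degIn, degIn, ← Set.ncard_union_eq (h.disjoint.mono Set.inter_subset_right
    Set.inter_subset_right), ← Set.inter_union_distrib_left, hAB, Set.inter_univ]

theorem sum_ncard_neighborSet_eq_of_isCompl [Fintype V] {A B : Set V} (h : IsCompl A B)
    [DecidablePred (· ∈ A)] :
    ∑ v ∈ A.toFinset, (G.neighborSet v).ncard = 2 * edgesIn G A + edgeCount G A B := by
  rw [← edgeCount_self, edgeCount_eq_sum_degIn, edgeCount_eq_sum_degIn, ← sum_add_distrib]
  exact sum_congr rfl fun v _ ↦ (G.degIn_add_degIn_of_isCompl h v).symm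

theorem mul_ncard_le_two_mul_edgesIn_add_edgeCount [Finite V] {A B : Set V} (h : IsCompl A B)
    {d : ℝ} (hd : ∀ v ∈ A, d ≤ (G.neighborSet v).ncard) :
    d * A.ncard ≤ 2 * edgesIn G A + edgeCount G A B := by
  classical
  have := Fintype.ofFinite V
  calc d * A.ncard = #A.toFinset • d := by rw [Set.ncard_eq_toFinset_card', nsmul_eq_mul, mul_comm]
    _ ≤ ∑ v ∈ A.toFinset, ((G.neighborSet v).ncard : ℝ) :=
        card_nsmul_le_sum _ _ _ fun v hv ↦ hd v (Set.mem_toFinset.1 hv)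
    _ = 2 * edgesIn G A + edgeCount G A B := by
        exact_mod_cast G.sum_ncard_neighborSet_eq_of_isCompl h

end SimpleGraph

theorem two_fifths_add_half_mul_le {γ p n x y : ℝ} (hγ0 : 0 < γ) (hγ1 : γ ≤ 1 / 10) (hp : 0 < p)
    (hy : 0 ≤ y) (hxy : x + y = n)
    (h : (2 / 5 + γ) * p * n * x ≤
      2 * ((γ ^ 2 / 10 ^ 3 + 3 * (γ ^ 2 / 10 ^ 4)) * p * n ^ 2) + (1 + γ ^ 2 / 10 ^ 4) * p * x * y) :
    (2 / 5 + γ / 2) * n ≤ y := by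
  have hc : 2 * (γ ^ 2 / 10 ^ 3 + 3 * (γ ^ 2 / 10 ^ 4)) ≤
      (3 / 5 - γ / 2) * (γ / 2 - γ ^ 2 / 10 ^ 4 * (2 / 5 + γ / 2)) := by
    nlinarith [mul_pos hγ0 hγ0, mul_nonneg hγ0.le (sub_nonneg.2 hγ1),
      mul_nonneg (mul_nonneg hγ0.le hγ0.le) (sub_nonneg.2 hγ1)]
  have hc0 : 0 < γ / 2 - γ ^ 2 / 10 ^ 4 * (2 / 5 + γ / 2) := by nlinarith
  have h' : (2 / 5 + γ) * n * x ≤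
      2 * ((γ ^ 2 / 10 ^ 3 + 3 * (γ ^ 2 / 10 ^ 4)) * n ^ 2) + (1 + γ ^ 2 / 10 ^ 4) * x * y :=
    le_of_mul_le_mul_left (by linarith) hp
  by_contra! hy'
  have hn : 0 < n := by nlinarith
  have hx : (3 / 5 - γ / 2) * n < x := by linarith
  have hx0 : 0 < x := by nlinarith
  linarith [mul_lt_mul_of_pos_left hy' (by positivity : 0 < (1 + γ ^ 2 / 10 ^ 4) * x),
    mul_lt_mul_of_pos_right hx (mul_pos hn hc0), mul_le_mul_of_nonneg_right hc (sq_nonneg n)]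


/-- **Claim 5.2** (deterministic form). Bounds on the sizes of the sides of a
partition `X ∪ Y` of a graph with minimum degree `(2/5 + γ)pn`, few edges
inside `X` and `Y`, and not too many edges between `X` and `Y`. -/
theorem sizes_of_cut (γ : ℝ) (hγ0 : 0 < γ) (hγ1 : γ ≤ 1 / 10) (p : ℝ) (hp : 0 < p)
    (n : ℕ) (H : SimpleGraph (Fin n))
    (hdeg : ∀ v : Fin n, (2 / 5 + γ) * p * n ≤ ((H.neighborSet v).ncard : ℝ))
    (X Y : Set (Fin n)) (hdisj : Disjoint X Y) (hcover : X ∪ Y = Set.univ)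
    (hX : (edgesIn H X : ℝ) ≤ (γ ^ 2 / 10 ^ 3 + 3 * (γ ^ 2 / 10 ^ 4)) * p * n ^ 2)
    (hY : (edgesIn H Y : ℝ) ≤ (γ ^ 2 / 10 ^ 3 + 3 * (γ ^ 2 / 10 ^ 4)) * p * n ^ 2)
    (hXY : (edgeCount H X Y : ℝ) ≤ (1 + γ ^ 2 / 10 ^ 4) * p * X.ncard * Y.ncard) :
    ((2 / 5 + γ / 2) * n ≤ (X.ncard : ℝ) ∧ (X.ncard : ℝ) ≤ (3 / 5 - γ / 2) * n) ∧
    ((2 / 5 + γ / 2) * n ≤ (Y.ncard : ℝ) ∧ (Y.ncard : ℝ) ≤ (3 / 5 - γ / 2) * n) := by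
  have hcompl : IsCompl X Y := ⟨hdisj, codisjoint_iff.2 hcover⟩
  have hsum : (X.ncard : ℝ) + Y.ncard = n := by
    rw [← hcompl.compl_eq]
    exact_mod_cast (Set.ncard_add_ncard_compl X).trans (by simp)
  have hXside := H.mul_ncard_le_two_mul_edgesIn_add_edgeCount hcompl fun v _ ↦ hdeg v
  have hYside := H.mul_ncard_le_two_mul_edgesIn_add_edgeCount hcompl.symm fun v _ ↦ hdeg v
  rw [H.edgeCount_comm] at hYside
  have hYlow := two_fifths_add_half_mul_le hγ0 hγ1 hp (Nat.cast_nonneg _) hsum (by linarith)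
  have hXlow := two_fifths_add_half_mul_le hγ0 hγ1 hp (Nat.cast_nonneg _)
    ((add_comm _ _).trans hsum) (by linarith)
  exact ⟨⟨hXlow, by linarith⟩, hYlow, by linarith⟩
end

section
/- Let 0 < γ ≤ 1/10, let η = γ²/10³ + 3·γ²/10⁴, let p ∈ (0,1], and let C ≥ 10¹⁰·(γ²/10⁴)⁻². Let H be a graph on n vertices with minimum degree δ(H) ≥ (2/5 + γ)·p·n, and suppose that e_H(A) ≤ max(|A|²·p, 9n) for every vertex set A ⊆ V(H). Let X ⊆ V(H) satisfy e_H(X) ≤ η·p·n², and define X̃ = {x ∈ X : deg_H(x, X) ≥ γ·deg_H(x)}. Then |X̃| ≤ γ·n/100; moreover, if e_H(X) > (1/2)·C·p⁻¹·n, then e_H(X̃) ≤ (1/2)·e_H(X). -/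
open MeasureTheory Filter

/-!
Every vertex of `X̃` has at least `γ δ(H) ≥ (2/5) γ p n` neighbours in `X`, so double counting
gives `|X̃| γ p n ≤ 5 e(X) ≤ 5 η p n²`, i.e. `|X̃| ≤ γ n / 100`. Consequently
`|X̃|² p ≤ |X̃| γ p n / 100 ≤ e(X) / 20`, while `e(X) > C n / (2p) ≥ 10¹⁰ n / 2` gives
`9 n ≤ e(X) / 2`; the hypothesis on `e(X̃)` then bounds it by `e(X) / 2`.
-/

open Finset

namespace SimpleGraph

variable {V : Type*} (G : SimpleGraph V)

theorem sum_degIn_le_two_mul_edgesIn [Fintype V] {A : Set V} {T : Finset V} (hTA : ↑T ⊆ A) :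
    ∑ x ∈ T, degIn G x A ≤ 2 * edgesIn G A := by
  classical
  set G' := fromEdgeSet {e ∈ G.edgeSet | ∀ v ∈ e, v ∈ A}
  have hdeg : ∀ x ∈ A, G'.degree x = degIn G x A := by
    intro x hx
    rw [degIn, ← card_neighborSet_eq_degree, ← Nat.card_eq_fintype_card, Nat.card_coe_set_eq]
    congr 1
    ext y
    simp only [mem_neighborSet, fromEdgeSet_adj, Set.mem_ofPred_eq, mem_edgeSet, Sym2.mem_iff,
      forall_eq_or_imp, hx, forall_eq, true_and, ne_eq, and_assoc, Set.mem_inter_iff,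
      and_congr_right_iff, and_iff_left_iff_imp, G']
    exact fun h _ => h.ne
  have hedges : #G'.edgeFinset = edgesIn G A := by
    rw [edgesIn, ← Set.ncard_coe_finset, coe_edgeFinset, edgeSet_fromEdgeSet]
    congr 1
    ext e
    simp only [Set.mem_sdiff, Set.mem_ofPred_eq, Sym2.mem_diagSet, and_iff_left_iff_imp, and_imp]
    exact fun he _ => G.not_isDiag_of_mem_edgeSet he
  calc ∑ x ∈ T, degIn G x A = ∑ x ∈ T, G'.degree x :=
        sum_congr rfl fun x hx => (hdeg x (hTA hx)).symm
    _ ≤ ∑ x, G'.degree x := sum_le_univ_sum_of_nonneg fun _ => Nat.zero_le _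
    _ = 2 * edgesIn G A := by rw [sum_degrees_eq_twice_card_edges, ← hedges]; congr!

theorem ncard_mul_le_two_mul_edgesIn [Finite V] {A S : Set V} {d : ℝ} (hSA : S ⊆ A)
    (hd : ∀ x ∈ S, d ≤ degIn G x A) : S.ncard * d ≤ 2 * edgesIn G A := by
  have := Fintype.ofFinite V
  set T := (Set.toFinite S).toFinset
  have hsum : #T • d ≤ ∑ x ∈ T, (degIn G x A : ℝ) :=
    card_nsmul_le_sum T _ d fun x hx => hd x ((Set.Finite.mem_toFinset _).mp hx)
  have hT : ↑T ⊆ A := by simpa [T] using hSA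
  rw [Set.ncard_eq_toFinset_card S, ← nsmul_eq_mul]
  exact_mod_cast hsum.trans (by exact_mod_cast G.sum_degIn_le_two_mul_edgesIn hT)

end SimpleGraph

open SimpleGraph

theorem ten_pow_ten_le_mul_inv {γ p C : ℝ} (hγ0 : 0 < γ) (hγ1 : γ ≤ 1 / 10) (hp0 : 0 < p)
    (hp1 : p ≤ 1) (hC : 10 ^ 10 * ((γ ^ 2 / 10 ^ 4)⁻¹) ^ 2 ≤ C) : 10 ^ 10 ≤ C * p⁻¹ := by
  have hγ : 1 ≤ (γ ^ 2 / 10 ^ 4)⁻¹ := one_le_inv₀ (by positivity) |>.mpr (by nlinarith)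
  have hp : 1 ≤ p⁻¹ := one_le_inv₀ hp0 |>.mpr hp1
  nlinarith

/-- **Claim 5.3** (deterministic form). The set `X̃` of vertices of `X` with
many neighbours in `X` is small, and if `X` spans many edges then `X̃` spans at
most half of them. -/
theorem high_internal_degree_set (γ : ℝ) (hγ0 : 0 < γ) (hγ1 : γ ≤ 1 / 10)
    (p : ℝ) (hp0 : 0 < p) (hp1 : p ≤ 1)
    (C : ℝ) (hC : 10 ^ 10 * ((γ ^ 2 / 10 ^ 4)⁻¹) ^ 2 ≤ C)
    (n : ℕ) (H : SimpleGraph (Fin n))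
    (hdeg : ∀ v : Fin n, (2 / 5 + γ) * p * n ≤ ((H.neighborSet v).ncard : ℝ))
    (hsets : ∀ A : Set (Fin n), (edgesIn H A : ℝ) ≤ max ((A.ncard : ℝ) ^ 2 * p) (9 * n))
    (X : Set (Fin n))
    (hX : (edgesIn H X : ℝ) ≤ (γ ^ 2 / 10 ^ 3 + 3 * (γ ^ 2 / 10 ^ 4)) * p * n ^ 2) :
    ((Set.ncard {x ∈ X | γ * ((H.neighborSet x).ncard : ℝ)
        ≤ ((H.neighborSet x ∩ X).ncard : ℝ)} : ℝ) ≤ γ * n / 100) ∧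
    (1 / 2 * C * p⁻¹ * n < (edgesIn H X : ℝ) →
      (edgesIn H {x ∈ X | γ * ((H.neighborSet x).ncard : ℝ)
          ≤ ((H.neighborSet x ∩ X).ncard : ℝ)} : ℝ)
        ≤ 1 / 2 * (edgesIn H X : ℝ)) := by
  set S := {x ∈ X | γ * ((H.neighborSet x).ncard : ℝ) ≤ ((H.neighborSet x ∩ X).ncard : ℝ)}
  set m : ℝ := (S.ncard : ℝ)
  set e : ℝ := (edgesIn H X : ℝ)
  have hn : (0 : ℝ) ≤ n := Nat.cast_nonneg n
  have hcount : m * (γ * p * n) ≤ 5 * e := by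
    have := H.ncard_mul_le_two_mul_edgesIn (S := S) (d := 2 / 5 * (γ * p * n))
      (fun x hx => hx.1)
      fun x hx => le_trans (by nlinarith [hdeg x]) hx.2
    linarith
  have hsmall : m ≤ γ * n / 100 := by
    rcases hn.eq_or_lt with hn0 | hnpos
    · have hmn : m ≤ n := by simpa [m] using Nat.cast_le (α := ℝ) |>.mpr (Set.ncard_le_card S)
      rw [← hn0] at hmn ⊢
      simpa using hmn
    · have hγpn : 0 < γ * p * n := by positivity
      refine le_of_mul_le_mul_left ?_ hγpn
      nlinarith
  refine ⟨hsmall, fun hlarge => (hsets S).trans (max_le ?_ ?_)⟩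
  · have hm0 : 0 ≤ m := Nat.cast_nonneg _
    calc m ^ 2 * p ≤ m * (γ * n / 100) * p := by rw [sq]; gcongr
      _ = m * (γ * p * n) / 100 := by ring
      _ ≤ 1 / 2 * e := by linarith [(Nat.cast_nonneg _ : (0 : ℝ) ≤ e)]
  · nlinarith [mul_le_mul_of_nonneg_right (ten_pow_ten_le_mul_inv hγ0 hγ1 hp0 hp1 hC) hn]
end
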